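/- arXiv:math/0612492 — 8 statements merged into one kernel-verified Lean document; each statement's English description precedes it below -/
import Mathlib

section
/- For every symmetric normalised kernel of negative type k on a set X there exists a real Hilbert space H and a map f : X → H with k(x,y) = ‖f(x) - f(y)‖² for all x, y ∈ X. -/
open Finsupp UniformSpace

/-- Finset version of the negative-type condition. -/
theorem negkernel_finset {X : Type*} (k : X → X → ℝ)
    (hneg : ∀ (n : ℕ) (x : Fin n → X) (l : Fin n → ℝ), (∑ i, l i) = 0 →
      ∑ i, ∑ j, l i * l j * k (x i) (x j) ≤ 0)
    (s : Finset X) (c : X → ℝ) (hc : ∑ x ∈ s, c x = 0) :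
    ∑ x ∈ s, ∑ y ∈ s, c x * c y * k x y ≤ 0 := by
  classical
  let e := s.equivFin
  have h1 : ∑ i : Fin s.card, c ((e.symm i : X)) = 0 := by
    rw [Equiv.sum_comp e.symm (fun a : s => c (a : X))]
    simpa only [Finset.sum_coe_sort] using hc
  have h2 := hneg s.card (fun i => ((e.symm i : X))) (fun i => c ((e.symm i : X))) h1
  have h3 : ∑ i : Fin s.card, ∑ j : Fin s.card,
      c ((e.symm i : X)) * c ((e.symm j : X)) * k ((e.symm i : X)) ((e.symm j : X))
      = ∑ x ∈ s, ∑ y ∈ s, c x * c y * k x y := by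
    rw [Equiv.sum_comp e.symm (fun a : s => ∑ j : Fin s.card,
      c (a : X) * c ((e.symm j : X)) * k (a : X) ((e.symm j : X)))]
    rw [show (∑ a : s, ∑ j : Fin s.card, c (a:X) * c ((e.symm j : X)) * k (a:X) ((e.symm j : X)))
        = ∑ a : s, ∑ b : s, c (a:X) * c (b:X) * k (a:X) (b:X) from
      Finset.sum_congr rfl fun a _ => Equiv.sum_comp e.symm
        (fun b : s => c (a:X) * c (b:X) * k (a:X) (b:X))]
    rw [← Finset.sum_coe_sort s (fun x => ∑ y ∈ s, c x * c y * k x y)]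
    exact Fintype.sum_congr _ _ fun a => Finset.sum_coe_sort s (fun y => c (a:X) * c y * k (a:X) y)
  rw [← h3]; exact h2

/-- Every symmetric normalised kernel of negative type is of the form
`k(x,y) = ‖f x - f y‖²` for a map `f` into a real Hilbert space. -/
theorem negative_type_kernel_realized {X : Type u} (k : X → X → ℝ)
    (hsymm : ∀ x y, k x y = k y x)
    (hnorm : ∀ x, k x x = 0)
    (hneg : ∀ (n : ℕ) (x : Fin n → X) (l : Fin n → ℝ), (∑ i, l i) = 0 →
      ∑ i, ∑ j, l i * l j * k (x i) (x j) ≤ 0) :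
    ∃ (H : Type u) (_ : NormedAddCommGroup H) (_ : InnerProductSpace ℝ H)
      (_ : CompleteSpace H) (f : X → H), ∀ x y, k x y = ‖f x - f y‖ ^ 2 := by
  classical
  -- the bilinear form associated to the kernel
  let B : (X →₀ ℝ) →ₗ[ℝ] (X →₀ ℝ) →ₗ[ℝ] ℝ :=
    Finsupp.linearCombination ℝ (fun x => Finsupp.linearCombination ℝ (fun y => k x y))
  have hBsingle : ∀ x y, B (single x 1) (single y 1) = k x y := by
    intro x y
    simp only [B, linearCombination_single, one_smul, LinearMap.smul_apply]
  have hBsum : ∀ (f g : X →₀ ℝ) (s : Finset X), f.support ⊆ s → g.support ⊆ s →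
      B f g = ∑ x ∈ s, ∑ y ∈ s, f x * g y * k x y := by
    intro f g s hf hg
    have inner_eq : ∀ x : X, Finsupp.linearCombination ℝ (fun y => k x y) g
        = ∑ y ∈ s, g y * k x y := by
      intro x
      rw [linearCombination_apply, Finsupp.sum,
        Finset.sum_subset hg (fun y _ hy => by
          rw [Finsupp.notMem_support_iff.mp hy, zero_smul])]
      exact Finset.sum_congr rfl fun y _ => smul_eq_mul _ _
    have happ : B f g = ∑ x ∈ f.support,
        f x • (Finsupp.linearCombination ℝ (fun y => k x y) g) := by
      simp only [B, linearCombination_apply, Finsupp.sum, LinearMap.coe_sum,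
        Finset.sum_apply, LinearMap.smul_apply]
    rw [happ, Finset.sum_subset hf (fun x _ hx => by
      rw [Finsupp.notMem_support_iff.mp hx, zero_smul])]
    refine Finset.sum_congr rfl fun x _ => ?_
    rw [inner_eq x, smul_eq_mul, Finset.mul_sum]
    exact Finset.sum_congr rfl fun y _ => by ring
  have hBsymm : ∀ f g : X →₀ ℝ, B f g = B g f := by
    intro f g
    rw [hBsum f g (f.support ∪ g.support) Finset.subset_union_left Finset.subset_union_right,
        hBsum g f (f.support ∪ g.support) Finset.subset_union_right Finset.subset_union_left,
        Finset.sum_comm]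
    exact Finset.sum_congr rfl fun x _ => Finset.sum_congr rfl fun y _ => by
      rw [hsymm]; ring
  -- the sum-of-coefficients functional
  let S : (X →₀ ℝ) →ₗ[ℝ] ℝ := Finsupp.linearCombination ℝ (fun _ => (1 : ℝ))
  have hBneg : ∀ f : X →₀ ℝ, S f = 0 → B f f ≤ 0 := by
    intro f hf
    rw [hBsum f f f.support subset_rfl subset_rfl]
    refine negkernel_finset k hneg f.support f ?_
    have : f.sum (fun _ a => a • (1:ℝ)) = 0 := hf
    simpa [Finsupp.sum, smul_eq_mul] using this
  let V := LinearMap.ker S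
  have hre : ∀ r : ℝ, RCLike.re r = r := fun r => rfl
  let cV : PreInnerProductSpace.Core ℝ V :=
  { inner := fun u v => -B u.val v.val / 2
    conj_inner_symm := fun u v => by
      show (starRingEnd ℝ) (-B v.val u.val / 2) = -B u.val v.val / 2
      rw [RCLike.conj_to_real, hBsymm]
    re_inner_nonneg := fun u => by
      have h := hBneg u.val (LinearMap.mem_ker.mp u.2)
      show (0:ℝ) ≤ RCLike.re (-B u.val u.val / 2)
      rw [hre]
      linarith
    add_left := fun u v w => by
      show -B (u.val + v.val) w.val / 2 = -B u.val w.val / 2 + -B v.val w.val / 2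
      rw [map_add, LinearMap.add_apply]; ring
    smul_left := fun u v r => by
      show -B (r • u.val) v.val / 2 = (starRingEnd ℝ) r * (-B u.val v.val / 2)
      rw [map_smul, LinearMap.smul_apply, RCLike.conj_to_real, smul_eq_mul]; ring }
  letI iSN : SeminormedAddCommGroup V :=
    @InnerProductSpace.Core.toSeminormedAddCommGroup ℝ V _ _ _ cV
  letI iNS : NormedSpace ℝ V := @InnerProductSpace.Core.toNormedSpace ℝ V _ _ _ cV
  letI iIP : InnerProductSpace ℝ V :=
  { toNormedSpace := iNS
    toInner := cV.toInner
    norm_sq_eq_re_inner := fun u => by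
      have h₁ : ‖u‖ ^ 2 = Real.sqrt (RCLike.re (cV.inner u u)) ^ 2 := rfl
      rw [h₁, Real.sq_sqrt (cV.re_inner_nonneg u)]
    conj_inner_symm := cV.conj_inner_symm
    add_left := cV.add_left
    smul_left := cV.smul_left }
  cases isEmpty_or_nonempty X with
  | inl h =>
    exact ⟨Completion V, inferInstance, inferInstance, inferInstance,
      fun x => isEmptyElim x, fun x => isEmptyElim x⟩
  | inr h =>
    obtain ⟨x₀⟩ := h
    have hmem : ∀ x : X, single x (1:ℝ) - single x₀ 1 ∈ LinearMap.ker S := by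
      intro x
      rw [LinearMap.mem_ker, map_sub]
      show Finsupp.linearCombination ℝ (fun _ => (1:ℝ)) (single x 1)
        - Finsupp.linearCombination ℝ (fun _ => (1:ℝ)) (single x₀ 1) = 0
      rw [linearCombination_single, linearCombination_single]; simp
    refine ⟨Completion V, inferInstance, inferInstance, inferInstance,
      fun x => ((⟨single x 1 - single x₀ 1, hmem x⟩ : V) : Completion V), fun x y => ?_⟩
    set a : V := ⟨single x 1 - single x₀ 1, hmem x⟩
    set b : V := ⟨single y 1 - single x₀ 1, hmem y⟩
    have hBval : B (single x (1:ℝ) - single y 1) (single x 1 - single y 1) = -(2 * k x y) := by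
      simp only [map_sub, LinearMap.sub_apply, hBsingle]
      rw [hnorm x, hnorm y, hsymm y x]
      ring
    have hab : (a : Completion V) - (b : Completion V) = ((a - b : V) : Completion V) :=
      (Completion.coe_sub a b).symm
    have habval : (a - b : V).val = single x 1 - single y 1 := by
      show (single x (1:ℝ) - single x₀ 1) - (single y 1 - single x₀ 1)
        = single x 1 - single y 1
      abel
    have h1 : (inner ℝ (a - b : V) (a - b : V) : ℝ) = k x y := by
      show -B (a - b : V).val (a - b : V).val / 2 = k x y
      rw [habval, hBval]; ring
    rw [hab, Completion.norm_coe, ← real_inner_self_eq_norm_sq, h1]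
end

section
/- For every symmetric kernel of positive type k : X × X → ℝ on a set X there exists a real Hilbert space H and a map f : X → H with k(x,y) = ⟨f(x), f(y)⟩ for all x, y ∈ X. -/
open Finsupp UniformSpace

/-- Every symmetric real kernel of positive type is of the form
`k(x,y) = ⟨f x, f y⟩` for a map `f` into a real Hilbert space. -/
theorem positive_type_kernel_realized {X : Type u} (k : X → X → ℝ)
    (hsymm : ∀ x y, k x y = k y x)
    (hpos : ∀ (n : ℕ) (x : Fin n → X) (l : Fin n → ℝ),
      0 ≤ ∑ i, ∑ j, l i * l j * k (x i) (x j)) :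
    ∃ (H : Type u) (_ : NormedAddCommGroup H) (_ : InnerProductSpace ℝ H)
      (_ : CompleteSpace H) (f : X → H), ∀ x y, k x y = (inner ℝ (f x) (f y) : ℝ) := by
  classical
  set V := (X →₀ ℝ) with hV
  let B : V →ₗ[ℝ] V →ₗ[ℝ] ℝ :=
    Finsupp.linearCombination ℝ (fun x => Finsupp.linearCombination ℝ (k x))
  have hB : ∀ f g : V, B f g = ∑ x ∈ f.support, ∑ y ∈ g.support, f x * (g y * k x y) := by
    intro f g
    show ((Finsupp.linearCombination ℝ fun x => Finsupp.linearCombination ℝ (k x)) f) g = _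
    rw [Finsupp.linearCombination_apply, Finsupp.sum, LinearMap.sum_apply]
    refine Finset.sum_congr rfl fun x _ => ?_
    rw [LinearMap.smul_apply, Finsupp.linearCombination_apply, Finsupp.sum, smul_eq_mul,
      Finset.mul_sum]
    simp [mul_assoc]
  have Bsymm : ∀ f g : V, B f g = B g f := by
    intro f g
    rw [hB, hB, Finset.sum_comm]
    refine Finset.sum_congr rfl fun y _ => Finset.sum_congr rfl fun x _ => ?_
    rw [hsymm x y]; ring
  have Bpos : ∀ f : V, 0 ≤ B f f := by
    intro f
    set s := f.support with hs
    set n := s.card with hn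
    let e : Fin n ≃ s := s.equivFin.symm
    have hsum : ∀ F : X → ℝ, ∑ i : Fin n, F (e i) = ∑ a ∈ s, F a := by
      intro F
      rw [← Finset.sum_coe_sort s F, ← Equiv.sum_comp e (fun a : s => F (a : X))]
    have key : ∑ i : Fin n, ∑ j : Fin n,
        (fun i => f ((e i : X))) i * (fun i => f ((e i : X))) j * k (e i : X) (e j : X)
        = B f f := by
      rw [hB]
      rw [← hsum (fun a => ∑ y ∈ s, f a * (f y * k a y))]
      refine Finset.sum_congr rfl fun i _ => ?_
      rw [← hsum (fun b => f (e i : X) * (f b * k (e i : X) b))]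
      refine Finset.sum_congr rfl fun j _ => ?_
      ring
    have := hpos n (fun i => (e i : X)) (fun i => f ((e i : X)))
    rwa [key] at this
  have Bsingle : ∀ x y : X, B (Finsupp.single x 1) (Finsupp.single y 1) = k x y := by
    intro x y
    show ((Finsupp.linearCombination ℝ fun x => Finsupp.linearCombination ℝ (k x))
      (Finsupp.single x 1)) (Finsupp.single y 1) = k x y
    rw [Finsupp.linearCombination_single, one_smul, Finsupp.linearCombination_single, one_smul]
  letI c : PreInnerProductSpace.Core ℝ V :=
    { inner := fun f g => B f g
      conj_inner_symm := fun f g => by simpa using Bsymm g f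
      re_inner_nonneg := fun f => by simpa using Bpos f
      add_left := fun f g h => by simp
      smul_left := fun f g r => by simp }
  letI : SeminormedAddCommGroup V := @InnerProductSpace.Core.toSeminormedAddCommGroup ℝ V _ _ _ c
  letI ns : NormedSpace ℝ V := InnerProductSpace.Core.toNormedSpace (c := c)
  letI : InnerProductSpace ℝ V :=
    { norm_smul_le := ns.norm_smul_le
      inner := fun f g => B f g
      norm_sq_eq_re_inner := fun f => by
        have h1 : ‖f‖ = Real.sqrt (B f f) := rfl
        rw [h1, sq, Real.mul_self_sqrt (Bpos f)]
        simp
      conj_inner_symm := c.conj_inner_symm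
      add_left := c.add_left
      smul_left := c.smul_left }
  refine ⟨Completion V, inferInstance, inferInstance, inferInstance,
    fun x => ((Finsupp.single x 1 : V) : Completion V), fun x y => ?_⟩
  rw [Completion.inner_coe]
  show k x y = B (Finsupp.single x 1) (Finsupp.single y 1)
  exact (Bsingle x y).symm
end

section
/- Schoenberg's lemma: a symmetric kernel k : X × X → ℝ is of negative type if and only if for every t ≥ 0 the kernel (x,y) ↦ exp(−t·k(x,y)) is symmetric and of positive type. -/
/-- A real kernel is of negative type. -/
def IsNegTypeKernel {X : Type*} (k : X → X → ℝ) : Prop :=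
  ∀ (n : ℕ) (x : Fin n → X) (l : Fin n → ℝ), (∑ i, l i) = 0 →
    ∑ i, ∑ j, l i * l j * k (x i) (x j) ≤ 0

/-- A real kernel is of positive type. -/
def IsPosTypeRealKernel {X : Type*} (k : X → X → ℝ) : Prop :=
  ∀ (n : ℕ) (x : Fin n → X) (l : Fin n → ℝ),
    0 ≤ ∑ i, ∑ j, l i * l j * k (x i) (x j)

open Finset

/-- Quadratic-form positivity for a finite real matrix. -/
def SchoenbergAux.QF {m : ℕ} (A : Matrix (Fin m) (Fin m) ℝ) : Prop :=
  ∀ v : Fin m → ℝ, 0 ≤ ∑ i, ∑ j, v i * v j * A i j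

namespace SchoenbergAux

lemma posSemidef_of_qf {m : ℕ} {A : Matrix (Fin m) (Fin m) ℝ}
    (hsym : ∀ i j, A i j = A j i) (h : QF A) : A.PosSemidef := by
  rw [Matrix.posSemidef_iff_dotProduct_mulVec]
  constructor
  · ext i j
    simp [Matrix.conjTranspose, hsym i j]
  · intro v
    have := h v
    simp only [star_trivial]
    calc (0:ℝ) ≤ ∑ i, ∑ j, v i * v j * A i j := this
    _ = dotProduct v (A.mulVec v) := by
        simp only [dotProduct, Matrix.mulVec, Finset.mul_sum]
        refine Finset.sum_congr rfl fun i _ => Finset.sum_congr rfl fun j _ => by ring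

lemma qf_schur {m : ℕ} {A B : Matrix (Fin m) (Fin m) ℝ}
    (hA : A.PosSemidef) (hB : QF B) : QF (fun i j => A i j * B i j) := by
  obtain ⟨C, hC⟩ : ∃ C : Matrix (Fin m) (Fin m) ℝ, A = star C * C := by
    open scoped MatrixOrder in exact CStarAlgebra.nonneg_iff_eq_star_mul_self.mp hA.nonneg
  intro v
  have hAij : ∀ i j, A i j = ∑ r, C r i * C r j := by
    intro i j
    rw [hC]
    simp [Matrix.mul_apply, Matrix.star_eq_conjTranspose, Matrix.conjTranspose_apply]
  calc (0:ℝ) ≤ ∑ r, ∑ i, ∑ j, (v i * C r i) * (v j * C r j) * B i j :=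
        Finset.sum_nonneg fun r _ => hB fun i => v i * C r i
    _ = ∑ i, ∑ j, v i * v j * ((fun i j => A i j * B i j) i j) := by
        rw [Finset.sum_comm]
        refine Finset.sum_congr rfl fun i _ => ?_
        rw [Finset.sum_comm]
        refine Finset.sum_congr rfl fun j _ => ?_
        simp only [hAij]
        rw [Finset.sum_mul, Finset.mul_sum]
        exact Finset.sum_congr rfl fun r _ => by ring

lemma qf_pow {m : ℕ} {A : Matrix (Fin m) (Fin m) ℝ}
    (hsym : ∀ i j, A i j = A j i) (h : QF A) (p : ℕ) :
    QF (fun i j => A i j ^ p) := by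
  induction p with
  | zero =>
    intro v
    simp only [pow_zero, mul_one]
    calc (0:ℝ) ≤ (∑ i, v i) * (∑ i, v i) := mul_self_nonneg _
      _ = ∑ i, ∑ j, v i * v j := by rw [Finset.sum_mul_sum]
  | succ p ih =>
    have := qf_schur (posSemidef_of_qf hsym h) ih
    intro v
    have h2 := this v
    simpa [pow_succ, mul_comm, mul_left_comm, mul_assoc] using h2

lemma qf_exp {m : ℕ} {A : Matrix (Fin m) (Fin m) ℝ}
    (hsym : ∀ i j, A i j = A j i) (h : QF A) :
    QF (fun i j => Real.exp (A i j)) := by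
  intro v
  have hexp : ∀ x : ℝ, Real.exp x = ∑' p : ℕ, x ^ p / (Nat.factorial p : ℝ) := by
    intro x
    rw [Real.exp_eq_exp_ℝ, NormedSpace.exp_eq_tsum_div]
  have hsumm : ∀ (c : ℝ) (x : ℝ), Summable (fun p : ℕ => c * (x ^ p / (Nat.factorial p : ℝ))) :=
    fun c x => (Real.summable_pow_div_factorial x).mul_left c
  have step1 : ∀ i : Fin m, ∑ j, v i * v j * Real.exp (A i j)
      = ∑' p : ℕ, ∑ j, v i * v j * (A i j ^ p / (Nat.factorial p : ℝ)) := by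
    intro i
    calc ∑ j, v i * v j * Real.exp (A i j)
        = ∑ j, ∑' p : ℕ, v i * v j * (A i j ^ p / (Nat.factorial p : ℝ)) := by
          refine Finset.sum_congr rfl fun j _ => ?_
          rw [hexp, ← tsum_mul_left]
      _ = ∑' p : ℕ, ∑ j, v i * v j * (A i j ^ p / (Nat.factorial p : ℝ)) :=
          (Summable.tsum_finsetSum (fun j _ => hsumm (v i * v j) (A i j))).symm
  calc ∑ i, ∑ j, v i * v j * Real.exp (A i j)
      = ∑' p : ℕ, ∑ i, ∑ j, v i * v j * (A i j ^ p / (Nat.factorial p : ℝ)) := by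
        simp only [step1]
        exact (Summable.tsum_finsetSum (fun i _ => summable_sum (fun j _ => hsumm (v i * v j) (A i j)))).symm
    _ ≥ 0 := by
        refine tsum_nonneg fun p => ?_
        have := qf_pow hsym h p v
        calc (0:ℝ) ≤ (∑ i, ∑ j, v i * v j * A i j ^ p) / (Nat.factorial p : ℝ) :=
              div_nonneg this (by positivity)
          _ = ∑ i, ∑ j, v i * v j * (A i j ^ p / (Nat.factorial p : ℝ)) := by
              rw [Finset.sum_div]
              exact Finset.sum_congr rfl fun i _ => by
                rw [Finset.sum_div]
                exact Finset.sum_congr rfl fun j _ => by ring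

lemma double_sum_expand {m : ℕ} (v a b : Fin m → ℝ) (c : Fin m → Fin m → ℝ) (d t : ℝ) :
    ∑ i, ∑ j, v i * v j * (t * (a i + b j - c i j - d)) =
    t * ((∑ i, v i * a i) * (∑ j, v j) + (∑ i, v i) * (∑ j, v j * b j)
      - (∑ i, ∑ j, v i * v j * c i j) - (∑ i, v i) * (∑ i, v i) * d) := by
  have h1 : ∀ (f g : Fin m → ℝ), (∑ i, f i) * (∑ j, g j) = ∑ i, ∑ j, f i * g j := fun f g =>
    Finset.sum_mul_sum _ _ _ _
  rw [h1, h1, h1]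
  simp only [Finset.sum_mul, ← Finset.sum_sub_distrib, ← Finset.sum_add_distrib,
    Finset.mul_sum]
  exact Finset.sum_congr rfl fun i _ => Finset.sum_congr rfl fun j _ => by ring

lemma centered_qf {X : Type*} {k : X → X → ℝ} (hneg : IsNegTypeKernel k)
    {m : ℕ} (x : Fin (m + 1) → X) (v : Fin (m + 1) → ℝ) :
    (∑ i, ∑ j, v i * v j * k (x i) (x j))
      - (∑ i, v i * k (x i) (x 0)) * (∑ i, v i)
      - (∑ i, v i) * (∑ j, v j * k (x 0) (x j))
      + (∑ i, v i) * (∑ i, v i) * k (x 0) (x 0) ≤ 0 := by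
  obtain ⟨S, hS⟩ : ∃ S : ℝ, S = ∑ i, v i := ⟨_, rfl⟩
  rw [← hS]
  set w : Fin (m + 2) → ℝ := Fin.cons (-S) v with hw
  set y : Fin (m + 2) → X := Fin.cons (x 0) x with hy
  have key := hneg (m + 2) y w (by
    rw [Fin.sum_univ_succ]
    simp [hw, hS])
  have expand : ∑ i : Fin (m + 2), ∑ j, w i * w j * k (y i) (y j)
      = (∑ i, ∑ j, v i * v j * k (x i) (x j))
        - (∑ i, v i * k (x i) (x 0)) * S
        - S * (∑ j, v j * k (x 0) (x j))
        + S * S * k (x 0) (x 0) := by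
    calc ∑ i : Fin (m + 2), ∑ j, w i * w j * k (y i) (y j)
        = ∑ i : Fin (m + 2), (w i * -S * k (y i) (x 0)
            + ∑ j : Fin (m + 1), w i * v j * k (y i) (x j)) := by
          refine Finset.sum_congr rfl fun i _ => ?_
          rw [Fin.sum_univ_succ]
          simp [hw, hy]
      _ = (-S * -S * k (x 0) (x 0) + ∑ j : Fin (m + 1), -S * v j * k (x 0) (x j))
            + ∑ i : Fin (m + 1), (v i * -S * k (x i) (x 0)
              + ∑ j : Fin (m + 1), v i * v j * k (x i) (x j)) := by
          rw [Fin.sum_univ_succ]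
          simp [hw, hy]
      _ = (∑ i, ∑ j, v i * v j * k (x i) (x j))
            - (∑ i, v i * k (x i) (x 0)) * S
            - S * (∑ j, v j * k (x 0) (x j))
            + S * S * k (x 0) (x 0) := by
          rw [Finset.sum_add_distrib]
          have e1 : ∑ i, v i * -S * k (x i) (x 0)
              = -((∑ i, v i * k (x i) (x 0)) * S) := by
            rw [Finset.sum_mul, ← Finset.sum_neg_distrib]
            exact Finset.sum_congr rfl fun i _ => by ring
          have e2 : ∑ j : Fin (m + 1), -S * v j * k (x 0) (x j)
              = -(S * ∑ j, v j * k (x 0) (x j)) := by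
            rw [Finset.mul_sum, ← Finset.sum_neg_distrib]
            exact Finset.sum_congr rfl fun i _ => by ring
          rw [e1, e2]
          ring
  rw [expand] at key
  exact key

end SchoenbergAux

open SchoenbergAux in
/-- Schoenberg's lemma: a symmetric kernel `k` is of negative type iff for every `t ≥ 0`
the kernel `exp (-t * k)` is symmetric and of positive type. -/
theorem schoenberg_lemma {X : Type*} (k : X → X → ℝ) (hsymm : ∀ x y, k x y = k y x) :
    IsNegTypeKernel k ↔ ∀ t : ℝ, 0 ≤ t →
      (∀ x y, Real.exp (-t * k x y) = Real.exp (-t * k y x)) ∧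
        IsPosTypeRealKernel (fun x y => Real.exp (-t * k x y)) := by
  constructor
  · -- forward direction
    intro hneg t ht
    refine ⟨fun a b => by rw [hsymm a b], ?_⟩
    intro n x l
    match n with
    | 0 => simp
    | m + 1 =>
      set A : Matrix (Fin (m + 1)) (Fin (m + 1)) ℝ := fun i j =>
        t * (k (x i) (x 0) + k (x 0) (x j) - k (x i) (x j) - k (x 0) (x 0)) with hA
      have hsymA : ∀ i j, A i j = A j i := by
        intro i j
        simp only [hA]
        rw [hsymm (x 0) (x j), hsymm (x 0) (x i), hsymm (x i) (x j)]
        ring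
      have hqfA : QF A := by
        intro v
        show 0 ≤ ∑ i, ∑ j, v i * v j *
          (t * (k (x i) (x 0) + k (x 0) (x j) - k (x i) (x j) - k (x 0) (x 0)))
        rw [double_sum_expand v (fun i => k (x i) (x 0)) (fun j => k (x 0) (x j))
          (fun i j => k (x i) (x j)) (k (x 0) (x 0)) t]
        refine mul_nonneg ht ?_
        have := centered_qf hneg x v
        linarith
      have key := qf_exp hsymA hqfA (fun i => l i *
        Real.exp (-t * k (x i) (x 0) + t * k (x 0) (x 0) / 2))
      simp only at key ⊢
      set c : Fin (m + 1) → ℝ := fun i =>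
        Real.exp (-t * k (x i) (x 0) + t * k (x 0) (x 0) / 2) with hc
      calc (0:ℝ) ≤ ∑ i, ∑ j, (l i * c i) * (l j * c j) * Real.exp (A i j) := key
        _ = ∑ i, ∑ j, l i * l j * Real.exp (-t * k (x i) (x j)) := by
            refine Finset.sum_congr rfl fun i _ => Finset.sum_congr rfl fun j _ => ?_
            have hprod : c i * (c j * Real.exp (A i j)) = Real.exp (-t * k (x i) (x j)) := by
              simp only [hc, hA]
              rw [← Real.exp_add, ← Real.exp_add]
              congr 1
              rw [hsymm (x 0) (x j)]
              ring
            rw [← hprod]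
            ring
  · -- reverse direction
    intro h n x l hl
    set f : ℝ → ℝ := fun t => ∑ i, ∑ j, l i * l j * Real.exp (-t * k (x i) (x j)) with hf
    have hf0 : f 0 = 0 := by
      simp only [hf, neg_zero, zero_mul, Real.exp_zero, mul_one]
      rw [← Finset.sum_mul_sum, hl, zero_mul]
    have hderiv : HasDerivAt f (∑ i, ∑ j, l i * l j * -k (x i) (x j)) 0 := by
      refine HasDerivAt.fun_sum fun i _ => HasDerivAt.fun_sum fun j _ => ?_
      have h1 : HasDerivAt (fun t : ℝ => -t * k (x i) (x j)) (-k (x i) (x j)) 0 := by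
        simpa using ((hasDerivAt_id (0 : ℝ)).neg.mul_const (k (x i) (x j)))
      have h2 : HasDerivAt (fun t : ℝ => Real.exp (-t * k (x i) (x j)))
          (-k (x i) (x j)) 0 := by
        simpa [Function.comp_def] using (Real.hasDerivAt_exp (-(0:ℝ) * k (x i) (x j))).comp 0 h1
      exact h2.const_mul (l i * l j)
    rw [hasDerivAt_iff_tendsto_slope] at hderiv
    have hd := hderiv.mono_left (nhdsWithin_mono 0 (s := Set.Ioi (0:ℝ))
      (t := {s : ℝ | s ≠ 0}) fun t ht => ne_of_gt ht)
    have hev : ∀ᶠ t in nhdsWithin 0 (Set.Ioi 0), 0 ≤ slope f 0 t := by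
      filter_upwards [self_mem_nhdsWithin] with t ht
      have h1 : 0 ≤ f t := (h t (le_of_lt ht)).2 n x l
      have : slope f 0 t = f t / t := by
        rw [slope_def_field]; rw [hf0]; ring_nf
      rw [this]
      exact div_nonneg h1 (le_of_lt ht)
    have hpos : 0 ≤ ∑ i, ∑ j, l i * l j * -k (x i) (x j) := ge_of_tendsto hd hev
    have heq : (∑ i, ∑ j, l i * l j * -k (x i) (x j))
        = -(∑ i, ∑ j, l i * l j * k (x i) (x j)) := by
      simp only [mul_neg, Finset.sum_neg_distrib]
    linarith [heq ▸ hpos]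
end

section
/- For 0 < p ≤ 2, the map k_p(x,y) = ‖x − y‖_p^p is a symmetric, normalised kernel of negative type on ℓ^p. -/
open scoped ENNReal
open Real MeasureTheory Set

lemma integrable_kernel {q : ℝ} (hq0 : 0 < q) (hq2 : q < 2) (t : ℝ) :
    IntegrableOn (fun s : ℝ => (1 - Real.cos (t * s)) * s ^ (-1 - q)) (Set.Ioi 0) := by
  have hmeas : AEStronglyMeasurable (fun s : ℝ => (1 - Real.cos (t * s)) * s ^ (-1 - q))
      (volume.restrict (Set.Ioi (0:ℝ))) := by
    apply ContinuousOn.aestronglyMeasurable _ measurableSet_Ioi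
    exact ((continuous_const.sub (Real.continuous_cos.comp (continuous_const.mul
      continuous_id))).continuousOn).mul
      (continuousOn_id.rpow_const fun x hx => Or.inl (ne_of_gt hx))
  have h1 : IntegrableOn (fun s : ℝ => (1 - Real.cos (t * s)) * s ^ (-1 - q)) (Set.Ioo 0 1) := by
    apply Integrable.mono' (g := fun s : ℝ => t ^ 2 / 2 * s ^ (1 - q))
    · exact (((intervalIntegral.integrableOn_Ioo_rpow_iff one_pos).2 (by linarith)).const_mul _)
    · exact hmeas.mono_measure (Measure.restrict_mono Set.Ioo_subset_Ioi_self le_rfl)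
    · filter_upwards [ae_restrict_mem measurableSet_Ioo] with s hs
      have hs0 : (0:ℝ) < s := hs.1
      have hc : 0 ≤ 1 - Real.cos (t * s) := by nlinarith [Real.cos_le_one (t * s)]
      have hp : (0:ℝ) ≤ s ^ (-1 - q) := Real.rpow_nonneg hs0.le _
      rw [Real.norm_eq_abs, abs_of_nonneg (mul_nonneg hc hp)]
      have hb : 1 - Real.cos (t * s) ≤ (t * s) ^ 2 / 2 := by
        nlinarith [Real.one_sub_sq_div_two_le_cos (x := t * s)]
      calc (1 - Real.cos (t * s)) * s ^ (-1 - q) ≤ (t * s) ^ 2 / 2 * s ^ (-1 - q) := by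
              exact mul_le_mul_of_nonneg_right hb hp
        _ = t ^ 2 / 2 * (s ^ (2:ℝ) * s ^ (-1 - q)) := by
              rw [show (2:ℝ) = ((2:ℕ):ℝ) by norm_num, Real.rpow_natCast]; push_cast; ring
        _ = t ^ 2 / 2 * s ^ (1 - q) := by
              rw [← Real.rpow_add hs0, show (2:ℝ) + (-1 - q) = 1 - q by ring]
  have h2 : IntegrableOn (fun s : ℝ => (1 - Real.cos (t * s)) * s ^ (-1 - q)) (Set.Ici 1) := by
    rw [integrableOn_Ici_iff_integrableOn_Ioi]
    apply Integrable.mono' (g := fun s : ℝ => 2 * s ^ (-1 - q))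
    · exact (((integrableOn_Ioi_rpow_iff one_pos).2 (by linarith)).const_mul _)
    · exact hmeas.mono_measure (Measure.restrict_mono (Set.Ioi_subset_Ioi zero_le_one) le_rfl)
    · filter_upwards [ae_restrict_mem measurableSet_Ioi] with s hs
      have hs0 : (0:ℝ) < s := lt_trans one_pos hs
      have hc : 0 ≤ 1 - Real.cos (t * s) := by nlinarith [Real.cos_le_one (t * s)]
      have hp : (0:ℝ) ≤ s ^ (-1 - q) := Real.rpow_nonneg hs0.le _
      rw [Real.norm_eq_abs, abs_of_nonneg (mul_nonneg hc hp)]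
      apply mul_le_mul_of_nonneg_right _ hp
      nlinarith [Real.neg_one_le_cos (t * s)]
  refine IntegrableOn.mono_set (h1.union h2) fun x hx => ?_
  rcases lt_or_ge x 1 with h | h
  · exact Or.inl ⟨hx, h⟩
  · exact Or.inr h

lemma scaling_eq {q : ℝ} (hq0 : 0 < q) (t : ℝ) :
    ∫ s in Set.Ioi (0:ℝ), (1 - Real.cos (t * s)) * s ^ (-1 - q) =
      |t| ^ q * ∫ s in Set.Ioi (0:ℝ), (1 - Real.cos s) * s ^ (-1 - q) := by
  rcases eq_or_ne t 0 with rfl | ht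
  · simp [Real.zero_rpow hq0.ne']
  · have habs : 0 < |t| := abs_pos.2 ht
    have step1 : ∫ s in Set.Ioi (0:ℝ), (1 - Real.cos (t * s)) * s ^ (-1 - q) =
        ∫ s in Set.Ioi (0:ℝ), |t| ^ (1 + q) *
          ((1 - Real.cos (|t| * s)) * (|t| * s) ^ (-1 - q)) := by
      apply setIntegral_congr_fun measurableSet_Ioi
      intro s hs
      have hs0 : (0:ℝ) < s := hs
      have hcos : Real.cos (|t| * s) = Real.cos (t * s) := by
        rcases abs_cases t with ⟨h, _⟩ | ⟨h, _⟩
        · rw [h]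
        · rw [h]; simp [Real.cos_neg, neg_mul]
      simp only []
      rw [hcos, Real.mul_rpow (abs_nonneg t) hs0.le]
      have : |t| ^ (1 + q) * |t| ^ (-1 - q) = 1 := by
        rw [← Real.rpow_add habs, show (1 + q) + (-1 - q) = 0 by ring, Real.rpow_zero]
      calc (1 - Real.cos (t * s)) * s ^ (-1 - q)
          = (|t| ^ (1 + q) * |t| ^ (-1 - q)) * ((1 - Real.cos (t * s)) * s ^ (-1 - q)) := by
            rw [this, one_mul]
        _ = |t| ^ (1 + q) * ((1 - Real.cos (t * s)) * (|t| ^ (-1 - q) * s ^ (-1 - q))) := by ring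
    rw [step1, MeasureTheory.integral_const_mul,
      integral_comp_mul_left_Ioi (fun u => (1 - Real.cos u) * u ^ (-1 - q)) 0 habs, mul_zero,
      smul_eq_mul, ← mul_assoc]
    congr 1
    rw [← Real.rpow_neg_one |t|, ← Real.rpow_add habs]
    congr 1
    ring

lemma I_pos {q : ℝ} (hq0 : 0 < q) (hq2 : q < 2) :
    0 < ∫ s in Set.Ioi (0:ℝ), (1 - Real.cos s) * s ^ (-1 - q) := by
  rw [setIntegral_pos_iff_support_of_nonneg_ae]
  · apply lt_of_lt_of_le _ (measure_mono (show Set.Ioo (Real.pi/2) Real.pi ⊆ _ from ?_))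
    · rw [Real.volume_Ioo]
      simp only [ENNReal.ofReal_pos]
      linarith [Real.pi_pos]
    · intro s hs
      have hpi := Real.pi_pos
      have hs0 : (0:ℝ) < s := lt_trans (by linarith) hs.1
      constructor
      · simp only [Function.mem_support]
        have hcos : Real.cos s ≤ 0 :=
          Real.cos_nonpos_of_pi_div_two_le_of_le hs.1.le (by linarith [hs.2])
        have h1 : (0:ℝ) < 1 - Real.cos s := by linarith
        exact (mul_pos h1 (Real.rpow_pos_of_pos hs0 _)).ne'
      · exact hs0
  · filter_upwards [ae_restrict_mem measurableSet_Ioi] with s hs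
    have hs0 : (0:ℝ) < s := hs
    have := Real.cos_le_one s
    exact mul_nonneg (by linarith) (Real.rpow_nonneg hs0.le _)
  · have h01 : (0:ℝ) < 1 := one_pos
    simpa using integrable_kernel hq0 hq2 1

lemma cos_sum_identity {n : ℕ} (a l : Fin n → ℝ) (hl : ∑ i, l i = 0) (s : ℝ) :
    ∑ i, ∑ j, l i * l j * (1 - Real.cos ((a i - a j) * s)) =
      -((∑ i, l i * Real.cos (a i * s)) ^ 2 + (∑ i, l i * Real.sin (a i * s)) ^ 2) := by
  have h : ∀ i j : Fin n, l i * l j * (1 - Real.cos ((a i - a j) * s)) =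
      l i * l j - ((l i * Real.cos (a i * s)) * (l j * Real.cos (a j * s))
        + (l i * Real.sin (a i * s)) * (l j * Real.sin (a j * s))) := by
    intro i j
    rw [sub_mul, Real.cos_sub]
    ring
  simp only [h, Finset.sum_sub_distrib, Finset.sum_add_distrib, ← Finset.sum_mul,
    ← Finset.mul_sum, hl]
  ring

lemma real_neg_type {q : ℝ} (hq0 : 0 < q) (hq2 : q ≤ 2) {n : ℕ} (a l : Fin n → ℝ)
    (hl : ∑ i, l i = 0) : ∑ i, ∑ j, l i * l j * |a i - a j| ^ q ≤ 0 := by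
  rcases eq_or_lt_of_le hq2 with rfl | hq2'
  · have h2 : ∀ x : ℝ, |x| ^ (2:ℝ) = x ^ 2 := fun x => by
      rw [show (2:ℝ) = ((2:ℕ):ℝ) by norm_num, Real.rpow_natCast, sq_abs]
    have key : ∑ i, ∑ j, l i * l j * |a i - a j| ^ (2:ℝ) = -(2 * (∑ i, l i * a i) ^ 2) := by
      simp only [h2]
      have h : ∀ i j : Fin n, l i * l j * (a i - a j) ^ 2 =
          (l i * a i ^ 2) * l j + l i * (l j * a j ^ 2) - 2 * ((l i * a i) * (l j * a j)) :=
        fun i j => by ring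
      simp only [h, Finset.sum_sub_distrib, Finset.sum_add_distrib, ← Finset.sum_mul,
        ← Finset.mul_sum, hl]
      ring
    rw [key]
    nlinarith [sq_nonneg (∑ i, l i * a i)]
  · set I := ∫ s in Set.Ioi (0:ℝ), (1 - Real.cos s) * s ^ (-1 - q) with hIdef
    have hIpos : 0 < I := I_pos hq0 hq2'
    have hint : ∀ i j : Fin n, MeasureTheory.Integrable
        (fun s : ℝ => l i * l j * ((1 - Real.cos ((a i - a j) * s)) * s ^ (-1 - q)))
        (MeasureTheory.volume.restrict (Set.Ioi 0)) :=
      fun i j => (integrable_kernel hq0 hq2' (a i - a j)).const_mul _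
    have swap : ∫ s in Set.Ioi (0:ℝ),
          ∑ i, ∑ j, l i * l j * ((1 - Real.cos ((a i - a j) * s)) * s ^ (-1 - q)) =
        ∑ i, ∑ j, ∫ s in Set.Ioi (0:ℝ),
          l i * l j * ((1 - Real.cos ((a i - a j) * s)) * s ^ (-1 - q)) := by
      rw [MeasureTheory.integral_finset_sum _
        (fun i _ => MeasureTheory.integrable_finset_sum _ (fun j _ => hint i j))]
      exact Finset.sum_congr rfl fun i _ => MeasureTheory.integral_finset_sum _
        fun j _ => hint i j
    have hIS : ∫ s in Set.Ioi (0:ℝ),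
          ∑ i, ∑ j, l i * l j * ((1 - Real.cos ((a i - a j) * s)) * s ^ (-1 - q)) =
        (∑ i, ∑ j, l i * l j * |a i - a j| ^ q) * I := by
      rw [swap]
      have : ∀ i j : Fin n, (∫ s in Set.Ioi (0:ℝ),
          l i * l j * ((1 - Real.cos ((a i - a j) * s)) * s ^ (-1 - q))) =
          l i * l j * |a i - a j| ^ q * I := by
        intro i j
        rw [MeasureTheory.integral_const_mul, scaling_eq hq0 (a i - a j)]
        ring
      simp only [this, Finset.sum_mul]
    have hnonpos : (∫ s in Set.Ioi (0:ℝ),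
        ∑ i, ∑ j, l i * l j * ((1 - Real.cos ((a i - a j) * s)) * s ^ (-1 - q))) ≤ 0 := by
      apply MeasureTheory.setIntegral_nonpos measurableSet_Ioi
      intro s hs
      have hs0 : (0:ℝ) < s := hs
      have hsum : ∑ i, ∑ j, l i * l j * ((1 - Real.cos ((a i - a j) * s)) * s ^ (-1 - q)) =
          (∑ i, ∑ j, l i * l j * (1 - Real.cos ((a i - a j) * s))) * s ^ (-1 - q) := by
        simp only [Finset.sum_mul]
        exact Finset.sum_congr rfl fun i _ => Finset.sum_congr rfl fun j _ => by ring
      rw [hsum, cos_sum_identity a l hl s]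
      apply mul_nonpos_of_nonpos_of_nonneg
      · nlinarith [sq_nonneg (∑ i, l i * Real.cos (a i * s)),
          sq_nonneg (∑ i, l i * Real.sin (a i * s))]
      · exact Real.rpow_nonneg hs0.le _
    rw [hIS] at hnonpos
    by_contra h
    push_neg at h
    exact absurd hnonpos (not_le.2 (mul_pos h hIpos))


/-- For `0 < p ≤ 2`, the kernel `k_p(x,y) = ‖x - y‖_p^p` on `ℓ^p` is symmetric,
normalised and of negative type. -/
theorem lp_norm_pow_neg_type (p : ℝ≥0∞) (hp0 : 0 < p) (hp2 : p ≤ 2) :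
    (∀ x y : lp (fun _ : ℕ => ℝ) p, ‖x - y‖ ^ p.toReal = ‖y - x‖ ^ p.toReal) ∧
    (∀ x : lp (fun _ : ℕ => ℝ) p, ‖x - x‖ ^ p.toReal = 0) ∧
    (∀ (n : ℕ) (z : Fin n → lp (fun _ : ℕ => ℝ) p) (l : Fin n → ℝ), (∑ i, l i) = 0 →
      ∑ i, ∑ j, l i * l j * ‖z i - z j‖ ^ p.toReal ≤ 0) := by
  have hptop : p ≠ ∞ := ne_top_of_le_ne_top (by norm_num) hp2
  have hq0 : 0 < p.toReal := ENNReal.toReal_pos hp0.ne' hptop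
  have hq2 : p.toReal ≤ 2 := by
    have := ENNReal.toReal_mono (by norm_num) hp2
    simpa using this
  refine ⟨fun x y => ?_, fun x => ?_, ?_⟩
  · rw [lp.norm_rpow_eq_tsum hq0, lp.norm_rpow_eq_tsum hq0]
    congr 1
    ext k
    simp only [lp.coeFn_sub, Pi.sub_apply, Real.norm_eq_abs]
    rw [abs_sub_comm]
  · rw [sub_self, lp.norm_rpow_eq_tsum hq0]
    simp [Real.zero_rpow hq0.ne']
  intro n z l hl
  have hnorm : ∀ i j : Fin n, ‖z i - z j‖ ^ p.toReal =
      ∑' k : ℕ, |(z i : ∀ _ : ℕ, ℝ) k - (z j : ∀ _ : ℕ, ℝ) k| ^ p.toReal := by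
    intro i j
    rw [lp.norm_rpow_eq_tsum hq0]
    simp only [lp.coeFn_sub, Pi.sub_apply, Real.norm_eq_abs]
  have hsummable : ∀ i j : Fin n,
      Summable (fun k : ℕ => |(z i : ∀ _ : ℕ, ℝ) k - (z j : ∀ _ : ℕ, ℝ) k| ^ p.toReal) := by
    intro i j
    have := (lp.memℓp (z i - z j)).summable hq0
    simpa [lp.coeFn_sub, Real.norm_eq_abs] using this
  calc ∑ i, ∑ j, l i * l j * ‖z i - z j‖ ^ p.toReal
      = ∑ i, ∑ j, ∑' k : ℕ,
          l i * l j * |(z i : ∀ _ : ℕ, ℝ) k - (z j : ∀ _ : ℕ, ℝ) k| ^ p.toReal := by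
        exact Finset.sum_congr rfl fun i _ => Finset.sum_congr rfl fun j _ => by
          rw [hnorm i j, ← tsum_mul_left]
    _ = ∑' k : ℕ, ∑ i, ∑ j,
          l i * l j * |(z i : ∀ _ : ℕ, ℝ) k - (z j : ∀ _ : ℕ, ℝ) k| ^ p.toReal := by
        have h1 : ∀ i : Fin n, ∑ j, ∑' k : ℕ,
            l i * l j * |(z i : ∀ _ : ℕ, ℝ) k - (z j : ∀ _ : ℕ, ℝ) k| ^ p.toReal =
            ∑' k : ℕ, ∑ j, l i * l j * |(z i : ∀ _ : ℕ, ℝ) k - (z j : ∀ _ : ℕ, ℝ) k| ^ p.toReal :=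
          fun i => (Summable.tsum_finsetSum fun j _ => (hsummable i j).mul_left _).symm
        rw [Finset.sum_congr rfl fun i _ => h1 i]
        exact (Summable.tsum_finsetSum fun i _ => summable_sum fun j _ => (hsummable i j).mul_left _).symm
    _ ≤ 0 := tsum_nonpos fun k =>
        real_neg_type hq0 hq2 (fun i => (z i : ∀ _ : ℕ, ℝ) k) l hl
end

section
/- The space ℓ^p coarsely embeds into ℓ² for every 0 < p ≤ 2. -/
set_option maxHeartbeats 1000000

open scoped ENNReal

noncomputable instance : Fact ((1 : ℝ≥0∞) ≤ 2) := ⟨one_le_two⟩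

open Classical in
/-- The metric on `ℓ^p`: the norm distance for `p ≥ 1`, and `Σ|xᵢ-yᵢ|^p = ‖x-y‖^p`
for `0 < p < 1`. -/
noncomputable def lpDist (p : ℝ≥0∞) (x y : lp (fun _ : ℕ => ℝ) p) : ℝ :=
  if 1 ≤ p then ‖x - y‖ else ‖x - y‖ ^ p.toReal



noncomputable section CE

open Real Filter

/-- amplitude squared -/
noncomputable def ampS (r : ℝ) (n : ℤ) : ℝ := (2:ℝ) ^ ((n : ℝ) * r)

/-- oscillation term -/
noncomputable def oscS (n : ℤ) (t : ℝ) : ℝ := 2 - 2 * Real.cos (t * (2:ℝ) ^ (-(n:ℝ)))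

noncomputable def termS (r t : ℝ) (n : ℤ) : ℝ := ampS r n * oscS n t

noncomputable def psiS (r : ℝ) (j : ℤ) : ℝ :=
  if j ≤ 0 then 4 * (2:ℝ) ^ ((j:ℝ) * r) else (2:ℝ) ^ (((j:ℝ) - 1) * (r - 2))

lemma ampS_pos (r : ℝ) (n : ℤ) : 0 < ampS r n := Real.rpow_pos_of_pos two_pos _

lemma two_sub_two_cos_nonneg (u : ℝ) : 0 ≤ 2 - 2 * Real.cos u := by
  nlinarith [Real.cos_le_one u]

lemma two_sub_two_cos_le_four (u : ℝ) : 2 - 2 * Real.cos u ≤ 4 := by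
  nlinarith [Real.neg_one_le_cos u]

lemma two_sub_two_cos_eq (u : ℝ) : 2 - 2 * Real.cos u = 4 * Real.sin (u/2) ^ 2 := by
  have h := Real.sin_sq_eq_half_sub (u/2)
  have : 2 * (u/2) = u := by ring
  rw [this] at h
  nlinarith [h]

lemma two_sub_two_cos_le_sq (u : ℝ) : 2 - 2 * Real.cos u ≤ u ^ 2 := by
  rw [two_sub_two_cos_eq]
  have h1 : |Real.sin (u/2)| ≤ |u/2| := Real.abs_sin_le_abs
  have h2 : Real.sin (u/2) ^ 2 ≤ (u/2) ^ 2 := by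
    rw [← sq_abs, ← sq_abs (u/2)]
    exact pow_le_pow_left₀ (abs_nonneg _) h1 2
  nlinarith

lemma oscS_nonneg (n : ℤ) (t : ℝ) : 0 ≤ oscS n t := two_sub_two_cos_nonneg _

lemma termS_nonneg (r t : ℝ) (n : ℤ) : 0 ≤ termS r t n :=
  mul_nonneg (ampS_pos r n).le (oscS_nonneg n t)

lemma summable_psiS {r : ℝ} (hr0 : 0 < r) (hr2 : r < 2) : Summable (psiS r) := by
  rw [summable_int_iff_summable_nat_and_neg]
  constructor
  · -- n : ℕ, psiS r n ≤ max 4 (2^(2-r)) * (2^(r-2))^n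
    have hq0 : (0:ℝ) ≤ (2:ℝ) ^ (r - 2) := (Real.rpow_pos_of_pos two_pos _).le
    have hq1 : (2:ℝ) ^ (r - 2) < 1 := by
      apply Real.rpow_lt_one_of_one_lt_of_neg one_lt_two (by linarith)
    apply Summable.of_nonneg_of_le (g := fun n : ℕ => psiS r n)
      (f := fun n : ℕ => max 4 ((2:ℝ) ^ (2 - r)) * ((2:ℝ) ^ (r-2)) ^ n)
    · intro n
      unfold psiS
      split <;> positivity
    · intro n
      rcases Nat.eq_zero_or_pos n with h | h
      · subst h
        have h4 : psiS r ((0:ℕ):ℤ) = 4 := by simp [psiS]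
        rw [h4, pow_zero, mul_one]
        exact le_max_left _ _
      · have hn : ¬ ((n:ℤ) ≤ 0) := by omega
        unfold psiS
        rw [if_neg hn]
        have : ((((n:ℤ)):ℝ) - 1) * (r - 2) = (2 - r) + (n:ℝ) * (r - 2) := by
          push_cast; ring
        rw [this, Real.rpow_add two_pos]
        have h2 : (2:ℝ) ^ ((n:ℝ) * (r-2)) = ((2:ℝ) ^ (r-2)) ^ n := by
          rw [mul_comm, Real.rpow_mul (by norm_num), Real.rpow_natCast]
        rw [h2]
        gcongr
        exact le_max_right _ _
    · exact (summable_geometric_of_lt_one hq0 hq1).mul_left _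
  · -- negatives: psiS r (-n) = 4 * (2^(-r))^n
    have hq0 : (0:ℝ) ≤ (2:ℝ) ^ (-r) := (Real.rpow_pos_of_pos two_pos _).le
    have hq1 : (2:ℝ) ^ (-r) < 1 :=
      Real.rpow_lt_one_of_one_lt_of_neg one_lt_two (by linarith)
    have : (fun n : ℕ => psiS r (-n)) = fun n : ℕ => 4 * ((2:ℝ) ^ (-r)) ^ n := by
      funext n
      unfold psiS
      rw [if_pos (by omega)]
      congr 1
      rw [← Real.rpow_natCast ((2:ℝ)^(-r)) n, ← Real.rpow_mul (by norm_num)]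
      push_cast
      ring_nf
    rw [this]
    exact (summable_geometric_of_lt_one hq0 hq1).mul_left _


noncomputable def SfunS (r t : ℝ) : ℝ := ∑' n : ℤ, termS r t n

section bounds
variable {r : ℝ} (hr0 : 0 < r) (hr2 : r < 2)

/-- `2 ^ ((m:ℝ)*r)` as rpow of zpow. -/
lemma rpow_int_mul (m : ℤ) (s : ℝ) : (2:ℝ) ^ ((m:ℝ) * s) = (((2:ℝ) ^ m : ℝ)) ^ s := by
  rw [Real.rpow_mul (by norm_num), Real.rpow_intCast]

lemma c0_pos : 0 < (2 - 2 * Real.cos 1) * (2:ℝ) ^ (-r) := by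
  have h1 : Real.cos 1 < Real.cos 0 := by
    apply Real.strictAntiOn_cos
    · exact ⟨le_refl 0, Real.pi_nonneg⟩
    · exact ⟨by norm_num, by linarith [Real.pi_gt_three]⟩
    · norm_num
  rw [Real.cos_zero] at h1
  have h2 := Real.rpow_pos_of_pos (two_pos (α := ℝ)) (-r)
  nlinarith

include hr0 hr2

lemma termS_le {t : ℝ} (ht : t ≠ 0) (n : ℤ) :
    termS r t n ≤ |t| ^ r * psiS r (n - Int.log 2 |t|) := by
  set m := Int.log 2 |t| with hm
  have habs : 0 < |t| := abs_pos.mpr ht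
  have h1 : ((2:ℕ):ℝ) ^ m ≤ |t| := Int.zpow_log_le_self (by norm_num) habs
  have h2 : |t| < ((2:ℕ):ℝ) ^ (m + 1) := Int.lt_zpow_succ_log_self (by norm_num) _
  push_cast at h1 h2
  rcases le_or_gt n m with hnm | hnm
  · -- small scales
    have hpsi : psiS r (n - m) = 4 * (2:ℝ) ^ (((n - m : ℤ):ℝ) * r) := by
      unfold psiS; rw [if_pos (by omega)]
    rw [hpsi]
    have hb : termS r t n ≤ ampS r n * 4 :=
      mul_le_mul_of_nonneg_left (two_sub_two_cos_le_four _) (ampS_pos r n).le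
    refine hb.trans ?_
    have key : ampS r n ≤ |t| ^ r * (2:ℝ) ^ (((n - m : ℤ):ℝ) * r) := by
      have hsplit : ampS r n = (2:ℝ) ^ (((m:ℤ):ℝ) * r) * (2:ℝ) ^ (((n - m : ℤ):ℝ) * r) := by
        unfold ampS
        rw [← Real.rpow_add two_pos]
        congr 1
        push_cast; ring
      rw [hsplit]
      gcongr
      rw [rpow_int_mul]
      exact Real.rpow_le_rpow (by positivity) h1 hr0.le
    calc ampS r n * 4 = 4 * ampS r n := by ring
      _ ≤ 4 * (|t| ^ r * (2:ℝ) ^ (((n - m : ℤ):ℝ) * r)) := by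
          gcongr
      _ = |t| ^ r * (4 * (2:ℝ) ^ (((n - m : ℤ):ℝ) * r)) := by ring
  · -- large scales
    have hpsi : psiS r (n - m) = (2:ℝ) ^ ((((n - m : ℤ):ℝ) - 1) * (r - 2)) := by
      unfold psiS; rw [if_neg (by omega)]
    rw [hpsi]
    have hb : termS r t n ≤ ampS r n * (t * (2:ℝ) ^ (-(n:ℝ))) ^ 2 :=
      mul_le_mul_of_nonneg_left (two_sub_two_cos_le_sq _) (ampS_pos r n).le
    refine hb.trans ?_
    have hexp : ampS r n * (t * (2:ℝ) ^ (-(n:ℝ))) ^ 2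
        = t ^ 2 * (2:ℝ) ^ ((n:ℝ) * (r - 2)) := by
      unfold ampS
      rw [mul_pow, ← Real.rpow_natCast ((2:ℝ) ^ (-(n:ℝ))) 2, ← Real.rpow_mul (by norm_num)]
      rw [show (n:ℝ) * (r - 2) = (n:ℝ) * r + (-(n:ℝ) * ((2:ℕ):ℝ)) by push_cast; ring,
        Real.rpow_add two_pos]
      ring
    rw [hexp]
    have hsplit : (2:ℝ) ^ ((n:ℝ) * (r - 2))
        = (2:ℝ) ^ ((((m:ℤ) + 1 : ℤ):ℝ) * (r - 2)) * (2:ℝ) ^ ((((n - m : ℤ):ℝ) - 1) * (r - 2)) := by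
      rw [← Real.rpow_add two_pos]
      congr 1
      push_cast; ring
    rw [hsplit, ← mul_assoc]
    have h2m : (2:ℝ) ^ ((((m:ℤ) + 1 : ℤ):ℝ) * (r - 2)) ≤ |t| ^ (r - 2) := by
      rw [rpow_int_mul]
      exact Real.rpow_le_rpow_of_nonpos habs h2.le (by linarith)
    have hmain : t ^ 2 * (2:ℝ) ^ ((((m:ℤ) + 1 : ℤ):ℝ) * (r - 2)) ≤ |t| ^ r := by
      calc t ^ 2 * (2:ℝ) ^ ((((m:ℤ) + 1 : ℤ):ℝ) * (r - 2)) ≤ t ^ 2 * |t| ^ (r - 2) := by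
            gcongr
        _ = |t| ^ (2:ℝ) * |t| ^ (r - 2) := by
            rw [Real.rpow_two, sq_abs]
        _ = |t| ^ r := by
            rw [← Real.rpow_add habs]; ring_nf
    exact mul_le_mul_of_nonneg_right hmain (Real.rpow_pos_of_pos two_pos _).le

lemma summable_termS (t : ℝ) : Summable (termS r t) := by
  rcases eq_or_ne t 0 with rfl | ht
  · have : termS r 0 = fun _ => 0 := by
      funext n
      unfold termS oscS
      simp
    rw [this]; exact summable_zero
  · apply Summable.of_nonneg_of_le (termS_nonneg r t) (termS_le hr0 hr2 ht)
    have h := ((summable_psiS hr0 hr2).mul_left (|t| ^ r))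
    exact ((Equiv.subRight (Int.log 2 |t|)).summable_iff
      (f := fun j : ℤ => |t| ^ r * psiS r j)).mpr h

lemma SfunS_le (t : ℝ) :
    SfunS r t ≤ ((∑' j : ℤ, psiS r j) * |t| ^ r) := by
  rcases eq_or_ne t 0 with rfl | ht
  · have h0 : SfunS r 0 = 0 := by
      unfold SfunS
      have : termS r 0 = fun _ => 0 := by
        funext n; unfold termS oscS; simp
      rw [this]; exact tsum_zero
    rw [h0]
    have : |(0:ℝ)| ^ r = 0 := by
      rw [abs_zero, Real.zero_rpow hr0.ne']
    rw [this, mul_zero]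
  · unfold SfunS
    have hmaj : Summable (fun n : ℤ => |t| ^ r * psiS r (n - Int.log 2 |t|)) := by
      have h := ((summable_psiS hr0 hr2).mul_left (|t| ^ r))
      exact ((Equiv.subRight (Int.log 2 |t|)).summable_iff
        (f := fun j : ℤ => |t| ^ r * psiS r j)).mpr h
    have h1 : ∑' n : ℤ, termS r t n ≤ ∑' n : ℤ, |t| ^ r * psiS r (n - Int.log 2 |t|) :=
      Summable.tsum_le_tsum (termS_le hr0 hr2 ht) (summable_termS hr0 hr2 t) hmaj
    refine h1.trans ?_
    have h2 : ∑' n : ℤ, |t| ^ r * psiS r (n - Int.log 2 |t|)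
        = |t| ^ r * ∑' n : ℤ, psiS r (n - Int.log 2 |t|) := tsum_mul_left
    have h3 : ∑' n : ℤ, psiS r (n - Int.log 2 |t|) = ∑' j : ℤ, psiS r j :=
      (Equiv.subRight (Int.log 2 |t|)).tsum_eq (psiS r)
    rw [h2, h3]; ring_nf; exact le_refl _

lemma SfunS_ge (t : ℝ) :
    (2 - 2 * Real.cos 1) * (2:ℝ) ^ (-r) * |t| ^ r ≤ SfunS r t := by
  rcases eq_or_ne t 0 with rfl | ht
  · have : |(0:ℝ)| ^ r = 0 := by rw [abs_zero, Real.zero_rpow hr0.ne']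
    rw [this, mul_zero]
    unfold SfunS
    exact tsum_nonneg (termS_nonneg r 0)
  · set m := Int.log 2 |t| with hm
    have habs : 0 < |t| := abs_pos.mpr ht
    have h1 : ((2:ℕ):ℝ) ^ m ≤ |t| := Int.zpow_log_le_self (by norm_num) habs
    have h2 : |t| < ((2:ℕ):ℝ) ^ (m + 1) := Int.lt_zpow_succ_log_self (by norm_num) _
    push_cast at h1 h2
    have hpow : (0:ℝ) < (2:ℝ) ^ m := zpow_pos two_pos m
    -- the m-th term dominates
    have hterm : (2 - 2 * Real.cos 1) * (2:ℝ) ^ (-r) * |t| ^ r ≤ termS r t m := by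
      unfold termS oscS
      have hu : t * (2:ℝ) ^ (-(m:ℝ)) = t / (2:ℝ) ^ m := by
        rw [Real.rpow_neg (by norm_num), Real.rpow_intCast]
        ring
      have hcos : Real.cos (t * (2:ℝ) ^ (-(m:ℝ))) = Real.cos (|t| / (2:ℝ) ^ m) := by
        rw [hu, ← Real.cos_abs, abs_div, abs_of_pos hpow]
      rw [hcos]
      have hu1 : 1 ≤ |t| / (2:ℝ) ^ m := (one_le_div hpow).mpr h1
      have hu2 : |t| / (2:ℝ) ^ m ≤ 2 := by
        rw [div_le_iff₀ hpow]
        calc |t| ≤ (2:ℝ) ^ (m+1) := h2.le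
          _ = 2 * (2:ℝ) ^ m := by rw [zpow_add_one₀ (by norm_num : (2:ℝ) ≠ 0)]; ring
      have hcosle : Real.cos (|t| / (2:ℝ) ^ m) ≤ Real.cos 1 := by
        apply Real.cos_le_cos_of_nonneg_of_le_pi (by norm_num)
        · calc |t| / (2:ℝ) ^ m ≤ 2 := hu2
            _ ≤ Real.pi := by linarith [Real.pi_gt_three]
        · exact hu1
      have hamp : |t| ^ r * (2:ℝ) ^ (-r) ≤ ampS r m := by
        unfold ampS
        rw [rpow_int_mul]
        have : |t| ^ r * (2:ℝ) ^ (-r) = (|t| / 2) ^ r := by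
          rw [Real.div_rpow (abs_nonneg t) (by norm_num), Real.rpow_neg (by norm_num)]
          ring_nf
        rw [this]
        apply Real.rpow_le_rpow (by positivity) _ hr0.le
        rw [div_le_iff₀ (by norm_num : (0:ℝ) < 2)]
        calc |t| ≤ 2 * (2:ℝ) ^ m := by
              calc |t| ≤ (2:ℝ) ^ (m+1) := h2.le
                _ = 2 * (2:ℝ) ^ m := by rw [zpow_add_one₀ (by norm_num : (2:ℝ) ≠ 0)]; ring
          _ = (2:ℝ) ^ m * 2 := by ring
      calc (2 - 2 * Real.cos 1) * (2:ℝ) ^ (-r) * |t| ^ r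
          = (|t| ^ r * (2:ℝ) ^ (-r)) * (2 - 2 * Real.cos 1) := by ring
        _ ≤ ampS r m * (2 - 2 * Real.cos (|t| / (2:ℝ) ^ m)) := by
            exact mul_le_mul hamp (by linarith [hcosle]) (two_sub_two_cos_nonneg 1) (ampS_pos r m).le
    refine hterm.trans ?_
    exact Summable.le_tsum (summable_termS hr0 hr2 t) m (fun j _ => termS_nonneg r t j)

omit hr0 hr2 in
lemma SfunS_nonneg (t : ℝ) : 0 ≤ SfunS r t := tsum_nonneg (termS_nonneg r t)

end bounds

/-! ### The embedding -/

abbrev idxI : Type := ℕ × ℤ × Bool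

noncomputable instance : Denumerable idxI := Denumerable.ofEncodableOfInfinite _

noncomputable def eIdx : ℕ ≃ idxI := (Denumerable.eqv idxI).symm

noncomputable def Gmap (r : ℝ) (x : ℕ → ℝ) (q : idxI) : ℝ :=
  (2:ℝ) ^ (((q.2.1:ℝ) * r) / 2) *
    (if q.2.2 then Real.sin (x q.1 * (2:ℝ) ^ (-(q.2.1:ℝ)))
     else Real.cos (x q.1 * (2:ℝ) ^ (-(q.2.1:ℝ))) - 1)

lemma Gmap_zero (r : ℝ) (q : idxI) : Gmap r (fun _ => 0) q = 0 := by
  unfold Gmap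
  rcases q with ⟨i, n, b⟩
  cases b <;> simp

lemma Gmap_pair (r : ℝ) (x y : ℕ → ℝ) (i : ℕ) (n : ℤ) :
    (Gmap r x (i, n, false) - Gmap r y (i, n, false)) ^ 2
      + (Gmap r x (i, n, true) - Gmap r y (i, n, true)) ^ 2
    = termS r (x i - y i) n := by
  unfold Gmap termS ampS oscS
  simp only [if_true, if_false, Bool.false_eq_true]
  set A := (2:ℝ) ^ (((n:ℝ) * r) / 2) with hA
  set a := x i * (2:ℝ) ^ (-(n:ℝ)) with ha
  set b := y i * (2:ℝ) ^ (-(n:ℝ)) with hb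
  have hA2 : A ^ 2 = (2:ℝ) ^ ((n:ℝ) * r) := by
    rw [hA, ← Real.rpow_natCast ((2:ℝ) ^ (((n:ℝ) * r) / 2)) 2, ← Real.rpow_mul (by norm_num)]
    norm_num
  have hab : (x i - y i) * (2:ℝ) ^ (-(n:ℝ)) = a - b := by rw [ha, hb]; ring
  rw [hab, ← hA2, Real.cos_sub]
  have h1 := Real.sin_sq_add_cos_sq a
  have h2 := Real.sin_sq_add_cos_sq b
  nlinarith [h1, h2]

lemma sq_diff_nonneg (r : ℝ) (x y : ℕ → ℝ) :
    ∀ q : idxI, 0 ≤ (Gmap r x q - Gmap r y q) ^ 2 := fun q => sq_nonneg _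

/-- Inner double sum over `ℤ × Bool` for a fixed coordinate. -/
lemma inner_summable {r : ℝ} (hr0 : 0 < r) (hr2 : r < 2) (x y : ℕ → ℝ) (i : ℕ) :
    Summable (fun w : ℤ × Bool => (Gmap r x (i, w.1, w.2) - Gmap r y (i, w.1, w.2)) ^ 2) ∧
    ∑' w : ℤ × Bool, (Gmap r x (i, w.1, w.2) - Gmap r y (i, w.1, w.2)) ^ 2
      = SfunS r (x i - y i) := by
  have hnn : ∀ w : ℤ × Bool, 0 ≤ (Gmap r x (i, w.1, w.2) - Gmap r y (i, w.1, w.2)) ^ 2 :=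
    fun w => sq_nonneg _
  have hBool : ∀ n : ℤ,
      ∑' b : Bool, (Gmap r x (i, n, b) - Gmap r y (i, n, b)) ^ 2 = termS r (x i - y i) n := by
    intro n
    rw [tsum_bool]
    exact Gmap_pair r x y i n
  have hsummB : ∀ n : ℤ,
      Summable (fun b : Bool => (Gmap r x (i, n, b) - Gmap r y (i, n, b)) ^ 2) :=
    fun n => Summable.of_finite
  have hsumm : Summable (fun w : ℤ × Bool =>
      (Gmap r x (i, w.1, w.2) - Gmap r y (i, w.1, w.2)) ^ 2) := by
    rw [summable_prod_of_nonneg hnn]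
    refine ⟨fun n => hsummB n, ?_⟩
    have : (fun n : ℤ => ∑' b : Bool, (Gmap r x (i, n, b) - Gmap r y (i, n, b)) ^ 2)
        = termS r (x i - y i) := funext hBool
    rw [this]
    exact summable_termS hr0 hr2 _
  refine ⟨hsumm, ?_⟩
  rw [Summable.tsum_prod' hsumm hsummB]
  unfold SfunS
  exact tsum_congr hBool

/-- The full sum over the index set equals the sum of `SfunS` of the coordinates. -/
lemma total_sum {r : ℝ} (hr0 : 0 < r) (hr2 : r < 2) (x y : ℕ → ℝ)
    (hxy : Summable fun i => |x i - y i| ^ r) :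
    Summable (fun q : idxI => (Gmap r x q - Gmap r y q) ^ 2) ∧
    ∑' q : idxI, (Gmap r x q - Gmap r y q) ^ 2 = ∑' i, SfunS r (x i - y i) := by
  have hnn : ∀ q : idxI, 0 ≤ (Gmap r x q - Gmap r y q) ^ 2 := fun q => sq_nonneg _
  have houter : Summable (fun i : ℕ => SfunS r (x i - y i)) := by
    apply Summable.of_nonneg_of_le (fun i => SfunS_nonneg (r := r) (x i - y i))
      (fun i => SfunS_le hr0 hr2 (x i - y i))
    exact hxy.mul_left _
  have hsumm : Summable (fun q : idxI => (Gmap r x q - Gmap r y q) ^ 2) := by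
    rw [summable_prod_of_nonneg hnn]
    refine ⟨fun i => (inner_summable hr0 hr2 x y i).1, ?_⟩
    have : (fun i : ℕ => ∑' w : ℤ × Bool, (Gmap r x (i, w.1, w.2) - Gmap r y (i, w.1, w.2)) ^ 2)
        = fun i => SfunS r (x i - y i) := funext fun i => (inner_summable hr0 hr2 x y i).2
    rw [this]
    exact houter
  refine ⟨hsumm, ?_⟩
  rw [Summable.tsum_prod' hsumm (fun i => (inner_summable hr0 hr2 x y i).1)]
  exact tsum_congr fun i => (inner_summable hr0 hr2 x y i).2

lemma rho_mono (a : ℝ) (ha : 0 ≤ a) (s : ℝ) (hs : 0 ≤ s) :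
    Monotone (fun u : ℝ => a * (max u 0) ^ s) := by
  intro u v huv
  have h : (max u 0) ^ s ≤ (max v 0) ^ s :=
    Real.rpow_le_rpow (le_max_right u 0) (max_le_max huv le_rfl) hs
  exact mul_le_mul_of_nonneg_left h ha

lemma rho_tendsto (a : ℝ) (ha : 0 < a) (s : ℝ) (hs : 0 < s) :
    Filter.Tendsto (fun u : ℝ => a * (max u 0) ^ s) Filter.atTop Filter.atTop := by
  apply Filter.Tendsto.const_mul_atTop ha
  exact (tendsto_rpow_atTop hs).comp
    (tendsto_atTop_mono (fun u => le_max_left u 0) tendsto_id)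

lemma sqrt_rpow_half (d : ℝ) (hd : 0 ≤ d) (r : ℝ) :
    Real.sqrt (d ^ r) = d ^ (r / 2) := by
  rw [Real.sqrt_eq_rpow, ← Real.rpow_mul hd]
  ring_nf

end CE


/-- `ℓ^p` coarsely embeds into `ℓ²` for `0 < p ≤ 2`. -/
theorem lp_coarsely_embeds_l2 (p : ℝ≥0∞) (hp0 : 0 < p) (hp2 : p ≤ 2) :
    ∃ (f : lp (fun _ : ℕ => ℝ) p → lp (fun _ : ℕ => ℝ) 2) (ρ₁ ρ₂ : ℝ → ℝ),
      Monotone ρ₁ ∧ Monotone ρ₂ ∧ Filter.Tendsto ρ₁ Filter.atTop Filter.atTop ∧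
      ∀ x y : lp (fun _ : ℕ => ℝ) p,
        ρ₁ (lpDist p x y) ≤ dist (f x) (f y) ∧ dist (f x) (f y) ≤ ρ₂ (lpDist p x y) := by
  rcases eq_or_ne p 2 with rfl | hne
  · -- p = 2 : identity embedding
    refine ⟨id, id, id, monotone_id, monotone_id, Filter.tendsto_id, fun x y => ?_⟩
    have h : lpDist 2 x y = dist x y := by
      rw [lpDist, if_pos (by norm_num : (1:ℝ≥0∞) ≤ 2), dist_eq_norm]
    exact ⟨le_of_eq h, le_of_eq h.symm⟩
  · -- 0 < p < 2
    have hptop : p ≠ ∞ := ne_top_of_le_ne_top ENNReal.ofNat_ne_top hp2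
    set r := p.toReal with hrdef
    have hr0 : 0 < r := ENNReal.toReal_pos hp0.ne' hptop
    have hr2 : r < 2 := by
      have hlt : p < 2 := lt_of_le_of_ne hp2 hne
      have h := (ENNReal.toReal_lt_toReal hptop ENNReal.ofNat_ne_top).mpr hlt
      simpa using h
    set c := (2 - 2 * Real.cos 1) * (2:ℝ) ^ (-r) with hc
    have hcpos : 0 < c := c0_pos
    set C := ∑' j : ℤ, psiS r j with hC
    have hCnn : 0 ≤ C := tsum_nonneg fun j => by unfold psiS; split <;> positivity
    -- membership of the image sequences in ℓ²
    have hmem : ∀ x : lp (fun _ : ℕ => ℝ) p, Memℓp (fun k => Gmap r (⇑x) (eIdx k)) 2 := by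
      intro x
      apply memℓp_gen
      have hsum0 : Summable fun i => |(⇑x) i - (fun _ => (0:ℝ)) i| ^ r := by
        have h := (lp.memℓp x).summable hr0
        simpa [Real.norm_eq_abs] using h
      have hs : Summable (fun q : idxI => (Gmap r (⇑x) q - Gmap r (fun _ => 0) q) ^ 2) :=
        (total_sum hr0 hr2 _ _ hsum0).1
      have hs' : Summable (fun q : idxI => (Gmap r (⇑x) q) ^ 2) := by
        simpa [Gmap_zero] using hs
      have hs2 : Summable (fun k : ℕ => (Gmap r (⇑x) (eIdx k)) ^ 2) :=
        ((eIdx.summable_iff (f := fun q : idxI => (Gmap r (⇑x) q) ^ 2)).mpr hs')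
      have hfun : (fun k : ℕ => ‖Gmap r (⇑x) (eIdx k)‖ ^ ((2:ℝ≥0∞)).toReal)
          = fun k : ℕ => (Gmap r (⇑x) (eIdx k)) ^ 2 := by
        funext k
        rw [show ((2:ℝ≥0∞)).toReal = ((2:ℕ):ℝ) by norm_num, Real.norm_eq_abs,
          Real.rpow_natCast, sq_abs]
      rw [hfun]
      exact hs2
    set f : lp (fun _ : ℕ => ℝ) p → lp (fun _ : ℕ => ℝ) 2 :=
      fun x => ⟨fun k => Gmap r (⇑x) (eIdx k), hmem x⟩ with hf
    -- the two-sided distance estimate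
    have hcore : ∀ x y : lp (fun _ : ℕ => ℝ) p,
        Real.sqrt (c * (∑' i, |(⇑x) i - (⇑y) i| ^ r)) ≤ dist (f x) (f y) ∧
        dist (f x) (f y) ≤ Real.sqrt (C * (∑' i, |(⇑x) i - (⇑y) i| ^ r)) := by
      intro x y
      have hT : Summable fun i => |(⇑x) i - (⇑y) i| ^ r := by
        have h := (lp.memℓp (x - y)).summable hr0
        simpa [Real.norm_eq_abs, lp.coeFn_sub, Pi.sub_apply] using h
      have htot := total_sum hr0 hr2 (⇑x) (⇑y) hT
      have hdist : dist (f x) (f y) = ‖f x - f y‖ := dist_eq_norm _ _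
      have hcoe : ∀ k : ℕ, (⇑(f x - f y)) k = Gmap r (⇑x) (eIdx k) - Gmap r (⇑y) (eIdx k) := by
        intro k
        rw [lp.coeFn_sub]
        rfl
      have hnorm2 : ‖f x - f y‖ ^ (2:ℕ) = ∑' i, SfunS r ((⇑x) i - (⇑y) i) := by
        have h := lp.norm_rpow_eq_tsum (p := 2) (by norm_num) (f x - f y)
        have hfun : (fun k : ℕ => ‖(⇑(f x - f y)) k‖ ^ ((2:ℝ≥0∞)).toReal)
            = fun k : ℕ => (Gmap r (⇑x) (eIdx k) - Gmap r (⇑y) (eIdx k)) ^ 2 := by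
          funext k
          rw [hcoe k, show ((2:ℝ≥0∞)).toReal = ((2:ℕ):ℝ) by norm_num, Real.norm_eq_abs,
            Real.rpow_natCast, sq_abs]
        rw [hfun] at h
        have hshift : ∑' k : ℕ, (Gmap r (⇑x) (eIdx k) - Gmap r (⇑y) (eIdx k)) ^ 2
            = ∑' q : idxI, (Gmap r (⇑x) q - Gmap r (⇑y) q) ^ 2 :=
          eIdx.tsum_eq (fun q : idxI => (Gmap r (⇑x) q - Gmap r (⇑y) q) ^ 2)
        calc ‖f x - f y‖ ^ (2:ℕ) = ‖f x - f y‖ ^ ((2:ℝ≥0∞)).toReal := by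
              rw [show ((2:ℝ≥0∞)).toReal = ((2:ℕ):ℝ) by norm_num, Real.rpow_natCast]
          _ = ∑' q : idxI, (Gmap r (⇑x) q - Gmap r (⇑y) q) ^ 2 := by rw [h, hshift]
          _ = ∑' i, SfunS r ((⇑x) i - (⇑y) i) := htot.2
      have hW : dist (f x) (f y) = Real.sqrt (∑' i, SfunS r ((⇑x) i - (⇑y) i)) := by
        rw [hdist, ← hnorm2, Real.sqrt_sq (norm_nonneg _)]
      have hsum2 : Summable fun i => SfunS r ((⇑x) i - (⇑y) i) := by
        apply Summable.of_nonneg_of_le (fun i => SfunS_nonneg (r := r) _)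
          (fun i => SfunS_le hr0 hr2 _) (hT.mul_left _)
      have hlow : c * (∑' i, |(⇑x) i - (⇑y) i| ^ r) ≤ ∑' i, SfunS r ((⇑x) i - (⇑y) i) := by
        calc c * (∑' i, |(⇑x) i - (⇑y) i| ^ r) = ∑' i, c * |(⇑x) i - (⇑y) i| ^ r :=
              tsum_mul_left.symm
          _ ≤ ∑' i, SfunS r ((⇑x) i - (⇑y) i) := by
              apply Summable.tsum_le_tsum _ (hT.mul_left _) hsum2
              intro i
              rw [hc]
              exact SfunS_ge hr0 hr2 _
      have hupp : ∑' i, SfunS r ((⇑x) i - (⇑y) i) ≤ C * (∑' i, |(⇑x) i - (⇑y) i| ^ r) := by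
        calc ∑' i, SfunS r ((⇑x) i - (⇑y) i) ≤ ∑' i, C * |(⇑x) i - (⇑y) i| ^ r := by
              apply Summable.tsum_le_tsum _ hsum2 (hT.mul_left _)
              intro i
              rw [hC]
              exact SfunS_le hr0 hr2 _
          _ = C * (∑' i, |(⇑x) i - (⇑y) i| ^ r) := tsum_mul_left
      exact ⟨hW ▸ Real.sqrt_le_sqrt hlow, hW ▸ Real.sqrt_le_sqrt hupp⟩
    rcases le_or_gt 1 p with hp1 | hp1
    · -- 1 ≤ p : lpDist is the norm
      refine ⟨f, fun u => Real.sqrt c * (max u 0) ^ (r/2),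
        fun u => Real.sqrt C * (max u 0) ^ (r/2),
        rho_mono _ (Real.sqrt_nonneg c) _ (by positivity),
        rho_mono _ (Real.sqrt_nonneg C) _ (by positivity),
        rho_tendsto _ (Real.sqrt_pos.mpr hcpos) _ (by positivity), fun x y => ?_⟩
      have hd : lpDist p x y = ‖x - y‖ := by rw [lpDist, if_pos hp1]
      have hTn : (∑' i, |(⇑x) i - (⇑y) i| ^ r) = ‖x - y‖ ^ r := by
        rw [lp.norm_rpow_eq_tsum hr0 (x - y)]
        exact tsum_congr fun i => by rw [lp.coeFn_sub, Pi.sub_apply, Real.norm_eq_abs]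
      have hmax : max (lpDist p x y) 0 = ‖x - y‖ := by
        rw [hd]; exact max_eq_left (lp.norm_nonneg' _)
      have he1 : Real.sqrt c * (max (lpDist p x y) 0) ^ (r/2)
          = Real.sqrt (c * (∑' i, |(⇑x) i - (⇑y) i| ^ r)) := by
        rw [hmax, hTn, Real.sqrt_mul hcpos.le, sqrt_rpow_half _ (lp.norm_nonneg' _)]
      have he2 : Real.sqrt C * (max (lpDist p x y) 0) ^ (r/2)
          = Real.sqrt (C * (∑' i, |(⇑x) i - (⇑y) i| ^ r)) := by
        rw [hmax, hTn, Real.sqrt_mul hCnn, sqrt_rpow_half _ (lp.norm_nonneg' _)]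
      constructor
      · show Real.sqrt c * (max (lpDist p x y) 0) ^ (r/2) ≤ dist (f x) (f y)
        rw [he1]; exact (hcore x y).1
      · show dist (f x) (f y) ≤ Real.sqrt C * (max (lpDist p x y) 0) ^ (r/2)
        rw [he2]; exact (hcore x y).2
    · -- p < 1 : lpDist is the norm to the power r
      refine ⟨f, fun u => Real.sqrt c * (max u 0) ^ ((1:ℝ)/2),
        fun u => Real.sqrt C * (max u 0) ^ ((1:ℝ)/2),
        rho_mono _ (Real.sqrt_nonneg c) _ (by positivity),
        rho_mono _ (Real.sqrt_nonneg C) _ (by positivity),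
        rho_tendsto _ (Real.sqrt_pos.mpr hcpos) _ (by positivity), fun x y => ?_⟩
      have hTnn : 0 ≤ ∑' i, |(⇑x) i - (⇑y) i| ^ r := tsum_nonneg fun i => by positivity
      have hd : lpDist p x y = (∑' i, |(⇑x) i - (⇑y) i| ^ r) := by
        rw [lpDist, if_neg (not_le.mpr hp1)]
        have hn : ‖x - y‖ = (∑' i, |(⇑x) i - (⇑y) i| ^ r) ^ (1/r) := by
          rw [lp.norm_eq_tsum_rpow hr0 (x - y)]
          congr 1
        rw [hn, ← Real.rpow_mul hTnn, one_div, inv_mul_cancel₀ hr0.ne', Real.rpow_one]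
      have hmax : max (lpDist p x y) 0 = ∑' i, |(⇑x) i - (⇑y) i| ^ r := by
        rw [hd]; exact max_eq_left hTnn
      have he1 : Real.sqrt c * (max (lpDist p x y) 0) ^ ((1:ℝ)/2)
          = Real.sqrt (c * (∑' i, |(⇑x) i - (⇑y) i| ^ r)) := by
        rw [hmax, Real.sqrt_mul hcpos.le, Real.sqrt_eq_rpow, Real.sqrt_eq_rpow]
      have he2 : Real.sqrt C * (max (lpDist p x y) 0) ^ ((1:ℝ)/2)
          = Real.sqrt (C * (∑' i, |(⇑x) i - (⇑y) i| ^ r)) := by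
        rw [hmax, Real.sqrt_mul hCnn, Real.sqrt_eq_rpow, Real.sqrt_eq_rpow]
      constructor
      · show Real.sqrt c * (max (lpDist p x y) 0) ^ ((1:ℝ)/2) ≤ dist (f x) (f y)
        rw [he1]; exact (hcore x y).1
      · show dist (f x) (f y) ≤ Real.sqrt C * (max (lpDist p x y) 0) ^ ((1:ℝ)/2)
        rw [he2]; exact (hcore x y).2
end

section
/- Let 𝒰 = {U_i} be a cover of a metric space X with multiplicity at most k (each point lies in at most k members) and Lebesgue number L > 0 (every ball of radius L is contained in some U_i). Then the functions φ_i(x) = d(x, X∖U_i) / Σ_j d(x, X∖U_j) form a partition of unity subordinate to 𝒰 satisfying Σ_i |φ_i(x) − φ_i(y)| ≤ ((2k+2)(2k+3)/L) · d(x,y) for all x, y ∈ X. -/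
open Metric Set Finset

private lemma min_const_lip {a b c e : ℝ} (he : 0 ≤ e) (h : a ≤ b + e) :
    min a c ≤ min b c + e := by
  have : min a c ≤ min (b + e) (c + e) :=
    min_le_min h (le_add_of_nonneg_right he)
  simpa [min_add_add_right] using this

/-- A cover of multiplicity at most `k` and Lebesgue number `L` admits a subordinate
partition of unity with Lipschitz constant `(2k+2)(2k+3)/L`. -/
theorem lipschitz_partition_of_unity {X ι : Type*} [MetricSpace X]
    (U : ι → Set X) (k : ℕ) (L : ℝ) (hL : 0 < L)
    (hcover : ∀ x : X, ∃ i, x ∈ U i)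
    (hmult : ∀ x : X, {i | x ∈ U i}.Finite ∧ {i | x ∈ U i}.ncard ≤ k)
    (hleb : ∀ x : X, ∃ i, Metric.ball x L ⊆ U i) :
    ∃ φ : ι → X → ℝ,
      (∀ i x, 0 ≤ φ i x ∧ φ i x ≤ 1) ∧
      (∀ i x, φ i x ≠ 0 → x ∈ U i) ∧
      (∀ x, HasSum (fun i => φ i x) 1) ∧
      (∀ x y : X, ∑' i, |φ i x - φ i y| ≤
        ((2 * (k : ℝ) + 2) * (2 * (k : ℝ) + 3) / L) * dist x y) := by
  classical
  set f : ι → X → ℝ := fun i x =>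
    if (U i)ᶜ.Nonempty then min (Metric.infDist x (U i)ᶜ) L else L with hf
  have hfnonneg : ∀ i x, 0 ≤ f i x := by
    intro i x
    simp only [hf]
    split
    · exact le_min Metric.infDist_nonneg hL.le
    · exact hL.le
  have hfmem : ∀ i x, f i x ≠ 0 → x ∈ U i := by
    intro i x h
    by_contra hx
    apply h
    have hne : (U i)ᶜ.Nonempty := ⟨x, hx⟩
    have hx' : x ∈ (U i)ᶜ := hx
    simp only [hf, if_pos hne, Metric.infDist_zero_of_mem hx']
    exact min_eq_left hL.le
  have hflip : ∀ i (x y : X), |f i x - f i y| ≤ dist x y := by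
    intro i x y
    simp only [hf]
    split
    · rw [abs_sub_le_iff]
      constructor
      · have h1 := Metric.infDist_le_infDist_add_dist (x := x) (y := y) (s := (U i)ᶜ)
        linarith [min_const_lip dist_nonneg h1 (c := L)]
      · have h1 := Metric.infDist_le_infDist_add_dist (x := y) (y := x) (s := (U i)ᶜ)
        rw [dist_comm y x] at h1
        linarith [min_const_lip dist_nonneg h1 (c := L)]
    · simpa using dist_nonneg
  have hfL : ∀ x : X, ∃ i, L ≤ f i x ∧ x ∈ U i := by
    intro x
    obtain ⟨i, hi⟩ := hleb x
    refine ⟨i, ?_, hi (Metric.mem_ball_self hL)⟩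
    simp only [hf]
    split
    · rename_i hne
      refine le_min ?_ le_rfl
      by_contra h
      push_neg at h
      obtain ⟨y, hy, hyd⟩ := (Metric.infDist_lt_iff hne).mp h
      exact hy (hi (Metric.mem_ball'.mpr hyd))
    · exact le_rfl
  set s : X → Finset ι := fun x => (hmult x).1.toFinset with hs
  have hmem_s : ∀ (x : X) i, i ∈ s x ↔ x ∈ U i := by
    intro x i; simp [hs, Set.Finite.mem_toFinset]
  have hzero : ∀ (x : X) i, i ∉ s x → f i x = 0 := by
    intro x i h
    by_contra h'
    exact h ((hmem_s x i).mpr (hfmem i x h'))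
  obtain ⟨S, hSdef⟩ : ∃ S : X → ℝ, ∀ x, S x = ∑ i ∈ s x, f i x :=
    ⟨fun x => ∑ i ∈ s x, f i x, fun _ => rfl⟩
  have hSsum : ∀ x, HasSum (fun i => f i x) (S x) := by
    intro x
    rw [hSdef]
    exact hasSum_sum_of_ne_finset_zero (hzero x)
  have hScard : ∀ x, (s x).card ≤ k := by
    intro x
    have h2 := (hmult x).2
    rwa [Set.ncard_eq_toFinset_card _ (hmult x).1] at h2
  have hSL : ∀ x, L ≤ S x := by
    intro x
    obtain ⟨i, hiL, hiU⟩ := hfL x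
    rw [hSdef]
    exact hiL.trans (Finset.single_le_sum (fun j _ => hfnonneg j x) ((hmem_s x i).mpr hiU))
  have hSpos : ∀ x, 0 < S x := fun x => hL.trans_le (hSL x)
  have hfleS : ∀ i x, f i x ≤ S x := by
    intro i x
    rw [hSdef]
    by_cases h : i ∈ s x
    · exact Finset.single_le_sum (fun j _ => hfnonneg j x) h
    · rw [hzero x i h, ← hSdef]; exact (hSpos x).le
  refine ⟨fun i x => f i x / S x, ?_, ?_, ?_, ?_⟩
  · intro i x
    exact ⟨div_nonneg (hfnonneg i x) (hSpos x).le,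
      div_le_one_of_le₀ (hfleS i x) (hSpos x).le⟩
  · intro i x h
    apply hfmem i x
    intro h0
    apply h
    simp only [h0, zero_div]
  · intro x
    have h := (hSsum x).div_const (S x)
    rwa [div_self (hSpos x).ne'] at h
  · intro x y
    have hx0 := (hSpos x).ne'
    have hy0 := (hSpos y).ne'
    set t : Finset ι := s x ∪ s y with ht
    set d : ℝ := dist x y with hd
    have hd0 : 0 ≤ d := dist_nonneg
    have htzero : ∀ i ∉ t, |f i x / S x - f i y / S y| = 0 := by
      intro i hi
      rw [hzero x i (fun h => hi (Finset.mem_union_left _ h)),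
          hzero y i (fun h => hi (Finset.mem_union_right _ h))]
      simp
    rw [tsum_eq_sum htzero]
    have hcard : (t.card : ℝ) ≤ 2 * k := by
      have h1 : t.card ≤ (s x).card + (s y).card := Finset.card_union_le _ _
      have h2 := hScard x
      have h3 := hScard y
      have : t.card ≤ 2 * k := by omega
      exact_mod_cast this
    have hSx_t : S x = ∑ i ∈ t, f i x := by
      rw [hSdef]
      exact Finset.sum_subset Finset.subset_union_left (fun i _ hi => hzero x i hi)
    have hSy_t : S y = ∑ i ∈ t, f i y := by
      rw [hSdef]
      exact Finset.sum_subset Finset.subset_union_right (fun i _ hi => hzero y i hi)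
    have hsum_abs : ∑ i ∈ t, |f i x - f i y| ≤ t.card * d := by
      calc ∑ i ∈ t, |f i x - f i y| ≤ ∑ _i ∈ t, d :=
            Finset.sum_le_sum (fun i _ => hflip i x y)
        _ = t.card * d := by rw [Finset.sum_const, nsmul_eq_mul]
    have hSdiff : |S x - S y| ≤ t.card * d := by
      rw [hSx_t, hSy_t, ← Finset.sum_sub_distrib]
      exact (Finset.abs_sum_le_sum_abs _ _).trans hsum_abs
    have key : ∀ i ∈ t, |f i x / S x - f i y / S y| ≤
        |f i x - f i y| / S x + f i y * (|S x - S y| / (S x * S y)) := by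
      intro i _
      have h1 : f i x / S x - f i y / S y
          = (f i x - f i y) / S x + f i y * ((S y - S x) / (S x * S y)) := by
        field_simp
        ring
      rw [h1]
      refine (abs_add_le _ _).trans ?_
      have e1 : |(f i x - f i y) / S x| = |f i x - f i y| / S x := by
        rw [abs_div, abs_of_pos (hSpos x)]
      have e2 : |f i y * ((S y - S x) / (S x * S y))|
          = f i y * (|S x - S y| / (S x * S y)) := by
        rw [abs_mul, abs_div, abs_of_nonneg (hfnonneg i y),
          abs_of_pos (mul_pos (hSpos x) (hSpos y)), abs_sub_comm (S y) (S x)]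
      rw [e1, e2]
    have hstep : ∑ i ∈ t, |f i x / S x - f i y / S y|
        ≤ (∑ i ∈ t, |f i x - f i y|) / S x
          + (∑ i ∈ t, f i y) * (|S x - S y| / (S x * S y)) := by
      calc ∑ i ∈ t, |f i x / S x - f i y / S y|
          ≤ ∑ i ∈ t, (|f i x - f i y| / S x + f i y * (|S x - S y| / (S x * S y))) :=
            Finset.sum_le_sum key
        _ = _ := by rw [Finset.sum_add_distrib, ← Finset.sum_div, ← Finset.sum_mul]
    rw [← hSy_t] at hstep
    have hSy_cancel : S y * (|S x - S y| / (S x * S y)) = |S x - S y| / S x := by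
      field_simp
    rw [hSy_cancel] at hstep
    have hb1 : (∑ i ∈ t, |f i x - f i y|) / S x ≤ (2 * k * d) / L := by
      apply div_le_div₀ (by positivity)
        (hsum_abs.trans (mul_le_mul_of_nonneg_right hcard hd0)) hL (hSL x)
    have hb2 : |S x - S y| / S x ≤ (2 * k * d) / L := by
      apply div_le_div₀ (by positivity)
        (hSdiff.trans (mul_le_mul_of_nonneg_right hcard hd0)) hL (hSL x)
    have hfinal : (2 * k * d) / L + (2 * k * d) / L
        ≤ ((2 * (k : ℝ) + 2) * (2 * (k : ℝ) + 3) / L) * d := by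
      rw [← add_div, div_mul_eq_mul_div, div_le_div_iff₀ hL hL]
      have hk : (0:ℝ) ≤ k := Nat.cast_nonneg k
      nlinarith [mul_nonneg hd0 hL.le, mul_nonneg (mul_nonneg hk hd0) hL.le,
        mul_nonneg (mul_nonneg (mul_nonneg hk hk) hd0) hL.le]
    linarith
end

section
/- A metric space of asymptotic dimension at most k has property A in the partition-of-unity formulation: for all R, ε > 0 there exists a cover 𝒰 = {U_i} of X with uniformly bounded diameters and a subordinate partition of unity {φ_i} such that Σ_i |φ_i(x) − φ_i(y)| < ε whenever d(x,y) ≤ R. -/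
/-- A metric space of asymptotic dimension at most `k` has property A in the
partition-of-unity formulation. -/
theorem asdim_implies_propertyA {X : Type*} [MetricSpace X] (k : ℕ)
    (hdim : ∀ L : ℝ, 0 < L → ∃ 𝒰 : Set (Set X),
      (∀ x : X, ∃ U ∈ 𝒰, x ∈ U) ∧
      (∃ B : ℝ, ∀ U ∈ 𝒰, ∀ x ∈ U, ∀ y ∈ U, dist x y ≤ B) ∧
      (∀ x : X, ∃ U ∈ 𝒰, Metric.ball x L ⊆ U) ∧
      (∀ x : X, {U ∈ 𝒰 | x ∈ U}.Finite ∧ {U ∈ 𝒰 | x ∈ U}.ncard ≤ k + 1)) :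
    ∀ R ε : ℝ, 0 < R → 0 < ε →
      ∃ (𝒰 : Set (Set X)) (φ : Set X → X → ℝ),
        (∀ x : X, ∃ U ∈ 𝒰, x ∈ U) ∧
        (∃ B : ℝ, ∀ U ∈ 𝒰, ∀ x ∈ U, ∀ y ∈ U, dist x y ≤ B) ∧
        (∀ U x, 0 ≤ φ U x ∧ φ U x ≤ 1) ∧
        (∀ U x, φ U x ≠ 0 → U ∈ 𝒰 ∧ x ∈ U) ∧
        (∀ x : X, HasSum (fun U : 𝒰 => φ U.1 x) 1) ∧
        (∀ x y : X, dist x y ≤ R → ∑' U : 𝒰, |φ U.1 x - φ U.1 y| < ε) := by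
  intro R ε hR hε
  classical
  obtain ⟨L, hLpos, hLkey⟩ : ∃ L : ℝ, 0 < L ∧ 4 * (k + 1) * R / L < ε := by
    have h0 : (0:ℝ) ≤ 4 * (k + 1) * R / ε :=
      div_nonneg (mul_nonneg (by positivity) hR.le) hε.le
    refine ⟨4 * (k + 1) * R / ε + 1, by linarith, ?_⟩
    rw [div_lt_iff₀ (by linarith)]
    have heq : ε * (4 * ((k:ℝ) + 1) * R / ε + 1) = 4 * ((k:ℝ) + 1) * R + ε := by
      field_simp
    rw [heq]
    linarith
  obtain ⟨𝒰, hcov, ⟨B, hB⟩, hLeb, hmult⟩ := hdim L hLpos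
  by_cases huniv : Set.univ ∈ 𝒰
  · -- X is bounded; trivial partition
    refine ⟨{Set.univ}, fun U _ => if U = Set.univ then 1 else 0, ?_, ⟨B, ?_⟩, ?_, ?_, ?_, ?_⟩
    · exact fun x => ⟨Set.univ, rfl, trivial⟩
    · intro U hU x _ y _
      rw [Set.mem_singleton_iff] at hU
      exact hB Set.univ huniv x trivial y trivial
    · intro U x
      by_cases hU : U = Set.univ <;> simp [hU]
    · intro U x h
      by_cases hU : U = Set.univ
      · exact ⟨by simp [hU], by simp [hU]⟩
      · simp [hU] at h
    · intro x
      have h1 : HasSum (fun V : ({Set.univ} : Set (Set X)) =>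
          if V.1 = Set.univ then (1:ℝ) else 0) (if (Set.univ : Set X) = Set.univ then (1:ℝ) else 0) := by
        refine hasSum_single (f := fun V : ({Set.univ} : Set (Set X)) =>
          if V.1 = Set.univ then (1:ℝ) else 0) ⟨Set.univ, rfl⟩ ?_
        intro b hb
        exact absurd (Subtype.ext (show b.1 = Set.univ from b.2)) hb
      simpa using h1
    · intro x y _
      have : (fun V : ({Set.univ} : Set (Set X)) =>
          |(if V.1 = Set.univ then (1:ℝ) else 0) - (if V.1 = Set.univ then (1:ℝ) else 0)|) =
          fun _ => (0:ℝ) := by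
        funext V; simp
      rw [this, tsum_zero]
      exact hε
  · -- main case
    have hne : ∀ V ∈ 𝒰, (Vᶜ : Set X).Nonempty := by
      intro V hV
      rcases Set.eq_empty_or_nonempty Vᶜ with h | h
      · rw [Set.compl_empty_iff] at h
        exact absurd (h ▸ hV) huniv
      · exact h
    set f : Set X → X → ℝ := fun V x => Metric.infDist x Vᶜ with hf
    have hfnonneg : ∀ V x, 0 ≤ f V x := fun V x => Metric.infDist_nonneg
    have hf0 : ∀ (V : Set X) (x : X), x ∉ V → f V x = 0 := by
      intro V x hx
      exact Metric.infDist_zero_of_mem hx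
    have hfin : ∀ x : X, {V : ↥𝒰 | x ∈ V.1}.Finite := by
      intro x
      have h1 : (Subtype.val ⁻¹' {U ∈ 𝒰 | x ∈ U} : Set ↥𝒰).Finite :=
        Set.Finite.preimage (Set.injOn_of_injective Subtype.val_injective) (hmult x).1
      convert h1 using 1
      ext V
      simp [V.2]
    classical
    let F : X → Finset ↥𝒰 := fun x => (hfin x).toFinset
    have hmemF : ∀ (x : X) (V : ↥𝒰), V ∈ F x ↔ x ∈ V.1 := by
      intro x V; simp [F]
    have hcardF : ∀ x, (F x).card ≤ k + 1 := by
      intro x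
      have h1 : {V : ↥𝒰 | x ∈ V.1}.ncard ≤ {U ∈ 𝒰 | x ∈ U}.ncard := by
        rw [← Set.ncard_image_of_injective _ Subtype.val_injective]
        refine Set.ncard_le_ncard ?_ (hmult x).1
        rintro U ⟨V, hV, rfl⟩
        exact ⟨V.2, hV⟩
      have h2 : (F x).card = {V : ↥𝒰 | x ∈ V.1}.ncard :=
        (Set.ncard_eq_toFinset_card _ (hfin x)).symm
      have h3 := (hmult x).2
      omega
    have hsupp : ∀ (x : X) (V : ↥𝒰), V ∉ F x → f V.1 x = 0 := by
      intro x V h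
      exact hf0 _ _ (fun hx => h ((hmemF x V).mpr hx))
    have hsummable : ∀ x, Summable (fun V : ↥𝒰 => f V.1 x) := by
      intro x
      exact summable_of_ne_finset_zero (s := F x) (fun V h => hsupp x V h)
    set s : X → ℝ := fun x => ∑' V : ↥𝒰, f V.1 x with hsdef
    have hs_eq' : ∀ (x : X) (G : Finset ↥𝒰), F x ⊆ G → s x = ∑ V ∈ G, f V.1 x := by
      intro x G hG
      exact tsum_eq_sum fun V h => hsupp x V (fun hm => h (hG hm))
    have hs_eq : ∀ x : X, s x = ∑ V ∈ F x, f V.1 x := fun x => hs_eq' x (F x) le_rfl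
    have hsL : ∀ x, L ≤ s x := by
      intro x
      obtain ⟨V, hV, hball⟩ := hLeb x
      have hxV : x ∈ V := hball (Metric.mem_ball_self hLpos)
      have hVF : (⟨V, hV⟩ : ↥𝒰) ∈ F x := (hmemF x _).mpr hxV
      have hfV : L ≤ f V x := by
        have hcne := hne V hV
        have : Nonempty ↥(Vᶜ : Set X) := hcne.to_subtype
        show L ≤ Metric.infDist x Vᶜ
        rw [Metric.infDist_eq_iInf]
        refine le_ciInf ?_
        rintro ⟨z, hz⟩
        have hz' : z ∉ Metric.ball x L := fun h => hz (hball h)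
        rw [Metric.mem_ball] at hz'
        rw [dist_comm]
        linarith [not_lt.mp hz']
      calc L ≤ f V x := hfV
        _ ≤ ∑ W ∈ F x, f W.1 x :=
            Finset.single_le_sum (fun W _ => hfnonneg W.1 x) hVF
        _ = s x := (hs_eq x).symm
    have hspos : ∀ x, 0 < s x := fun x => lt_of_lt_of_le hLpos (hsL x)
    have hfle : ∀ (V : ↥𝒰) (x : X), f V.1 x ≤ s x := by
      intro V x
      by_cases h : x ∈ V.1
      · rw [hs_eq x]
        exact Finset.single_le_sum (fun W _ => hfnonneg W.1 x) ((hmemF x V).mpr h)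
      · rw [hf0 _ _ h]
        exact (hspos x).le
    have hlip : ∀ (V : Set X) (x y : X), |f V x - f V y| ≤ dist x y := by
      intro V x y
      rw [abs_sub_le_iff]
      constructor
      · have := Metric.infDist_le_infDist_add_dist (x := x) (y := y) (s := Vᶜ)
        simp only [hf]; linarith
      · have := Metric.infDist_le_infDist_add_dist (x := y) (y := x) (s := Vᶜ)
        rw [dist_comm] at this
        simp only [hf]; linarith
    refine ⟨𝒰, fun V x => if V ∈ 𝒰 then f V x / s x else 0, hcov, ⟨B, hB⟩, ?_, ?_, ?_, ?_⟩
    · intro U x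
      by_cases hU : U ∈ 𝒰
      · simp only [if_pos hU]
        exact ⟨div_nonneg (hfnonneg U x) (hspos x).le,
          (div_le_one (hspos x)).mpr (hfle ⟨U, hU⟩ x)⟩
      · simp [hU]
    · intro U x h
      by_cases hU : U ∈ 𝒰
      · refine ⟨hU, ?_⟩
        by_contra hx
        exact h (by simp [if_pos hU, hf0 U x hx])
      · exact absurd (by simp [hU]) h
    · intro x
      have h1 : HasSum (fun V : ↥𝒰 => f V.1 x / s x) (s x / s x) :=
        (hsummable x).hasSum.div_const _
      rw [div_self (hspos x).ne'] at h1
      refine h1.congr_fun fun V => ?_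
      simp [V.2]
    · intro x y hxy
      set G : Finset ↥𝒰 := F x ∪ F y with hG
      have hGx : F x ⊆ G := Finset.subset_union_left
      have hGy : F y ⊆ G := Finset.subset_union_right
      have hzero : ∀ V : ↥𝒰, V ∉ G →
          |(if V.1 ∈ 𝒰 then f V.1 x / s x else 0) - (if V.1 ∈ 𝒰 then f V.1 y / s y else 0)| = 0 := by
        intro V h
        have h1 : f V.1 x = 0 := hsupp x V (fun hm => h (hGx hm))
        have h2 : f V.1 y = 0 := hsupp y V (fun hm => h (hGy hm))
        simp [h1, h2]
      have htsum : (∑' V : ↥𝒰,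
          |(if V.1 ∈ 𝒰 then f V.1 x / s x else 0) - (if V.1 ∈ 𝒰 then f V.1 y / s y else 0)|) =
          ∑ V ∈ G, |(f V.1 x / s x) - (f V.1 y / s y)| := by
        rw [tsum_eq_sum hzero]
        exact Finset.sum_congr rfl fun V _ => by simp [V.2]
      rw [htsum]
      have hcardG : (G.card : ℝ) ≤ 2 * (k + 1) := by
        have h1 : G.card ≤ (F x).card + (F y).card := by
          rw [hG]; exact Finset.card_union_le _ _
        have h2 := hcardF x
        have h3 := hcardF y
        have : G.card ≤ 2 * (k + 1) := by omega
        exact_mod_cast this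
      have hsum_abs : ∑ V ∈ G, |f V.1 x - f V.1 y| ≤ 2 * (k + 1) * R := by
        calc ∑ V ∈ G, |f V.1 x - f V.1 y| ≤ ∑ _V ∈ G, R :=
              Finset.sum_le_sum fun V _ => (hlip V.1 x y).trans hxy
          _ = (G.card : ℝ) * R := by rw [Finset.sum_const, nsmul_eq_mul]
          _ ≤ 2 * (k + 1) * R := by nlinarith
      have hssub : |s x - s y| ≤ 2 * (k + 1) * R := by
        rw [hs_eq' x G hGx, hs_eq' y G hGy, ← Finset.sum_sub_distrib]
        exact (Finset.abs_sum_le_sum_abs _ _).trans hsum_abs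
      have hsy_eq : ∑ V ∈ G, f V.1 y = s y := (hs_eq' y G hGy).symm
      have hpt : ∀ V ∈ G, |f V.1 x / s x - f V.1 y / s y| ≤
          |f V.1 x - f V.1 y| / s x + f V.1 y * (|s x - s y| / (s x * s y)) := by
        intro V _
        have hsx := hspos x
        have hsy := hspos y
        have key : f V.1 x / s x - f V.1 y / s y =
            (f V.1 x - f V.1 y) / s x + f V.1 y * ((s y - s x) / (s x * s y)) := by
          field_simp
          ring
        rw [key]
        refine (abs_add_le _ _).trans ?_
        gcongr
        · rw [abs_div, abs_of_pos hsx]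
        · rw [abs_mul, abs_of_nonneg (hfnonneg V.1 y), abs_div,
            abs_of_pos (mul_pos hsx hsy), abs_sub_comm]
      calc ∑ V ∈ G, |f V.1 x / s x - f V.1 y / s y|
          ≤ ∑ V ∈ G, (|f V.1 x - f V.1 y| / s x + f V.1 y * (|s x - s y| / (s x * s y))) :=
            Finset.sum_le_sum hpt
        _ = (∑ V ∈ G, |f V.1 x - f V.1 y|) / s x +
            (∑ V ∈ G, f V.1 y) * (|s x - s y| / (s x * s y)) := by
            rw [Finset.sum_add_distrib, Finset.sum_div, ← Finset.sum_mul]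
        _ = (∑ V ∈ G, |f V.1 x - f V.1 y|) / s x + |s x - s y| / s x := by
            rw [hsy_eq]
            congr 1
            field_simp [(hspos x).ne', (hspos y).ne']
        _ ≤ (2 * (k + 1) * R) / s x + (2 * (k + 1) * R) / s x :=
            add_le_add ((div_le_div_iff_of_pos_right (hspos x)).mpr hsum_abs)
              ((div_le_div_iff_of_pos_right (hspos x)).mpr hssub)
        _ ≤ (2 * (k + 1) * R) / L + (2 * (k + 1) * R) / L := by
            have h1 : 0 ≤ 2 * ((k:ℝ) + 1) * R :=
              mul_nonneg (by positivity) hR.le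
            exact add_le_add (div_le_div_of_nonneg_left h1 hLpos (hsL x))
              (div_le_div_of_nonneg_left h1 hLpos (hsL x))
        _ = 4 * (k + 1) * R / L := by ring
        _ < ε := hLkey
end

section
/- No expander coarsely embeds into Hilbert space: if (G_n) is a sequence of finite connected D-regular graphs with |V_n| → ∞ and the smallest positive Laplacian eigenvalue λ_n ≥ λ > 0 for all n, then the disjoint union X = ⊔ V_n (with a metric restricting to the graph metric on each V_n and with d(V_n, V_m) ≥ max(diam V_n, diam V_m) for n ≠ m) admits no coarse embedding into ℓ². -/
open Finset Matrix
open scoped RealInnerProductSpace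

lemma real_poincare {V : Type} [Fintype V] [DecidableEq V]
    (G : SimpleGraph V) [DecidableRel G.Adj] (hconn : G.Connected)
    (lam : ℝ)
    (hgap : ∀ μ : ℝ, (∃ g : V → ℝ, g ≠ 0 ∧ (G.lapMatrix ℝ).mulVec g = μ • g) → μ = 0 ∨ lam ≤ μ)
    (g : V → ℝ) (hsum : ∑ v, g v = 0) :
    lam * ∑ v, g v ^ 2 ≤ ∑ v, ∑ w, if G.Adj v w then (g v - g w) ^ 2 else 0 := by
  classical
  have hA : (G.lapMatrix ℝ).IsHermitian := (SimpleGraph.posSemidef_lapMatrix ℝ G).1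
  set b := hA.eigenvectorBasis with hb
  set μ := hA.eigenvalues with hμ
  set x : EuclideanSpace ℝ V := (WithLp.equiv 2 (V → ℝ)).symm g with hx
  have hxv : ∀ v, x v = g v := fun v => rfl
  have hbne : ∀ i, (⇑(b i) : V → ℝ) ≠ 0 := by
    intro i h
    exact b.orthonormal.ne_zero i (by ext v; exact congrFun h v)
  have hgap' : ∀ i, μ i = 0 ∨ lam ≤ μ i := by
    intro i
    exact hgap (μ i) ⟨⇑(b i), hbne i, hA.mulVec_eigenvectorBasis i⟩
  -- eigenvectors with eigenvalue 0 are constant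
  have hker : ∀ i, μ i = 0 → ⟪x, b i⟫ = 0 := by
    intro i hi
    have h0 : (G.lapMatrix ℝ) *ᵥ ⇑(b i) = 0 := by
      rw [hA.mulVec_eigenvectorBasis i, show hA.eigenvalues i = 0 from hi, zero_smul]
    have hconst : ∀ v w : V, b i v = b i w := by
      have := (G.lapMatrix_mulVec_eq_zero_iff_forall_reachable (x := ⇑(b i))).1
        h0
      exact fun v w => this v w (hconn v w)
    obtain ⟨v₀⟩ := hconn.nonempty
    have : ⟪x, b i⟫ = ∑ v, g v * b i v₀ := by
      rw [PiLp.inner_apply]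
      exact Finset.sum_congr rfl fun v _ => by
        simp [RCLike.inner_apply, hxv, hconst v v₀, mul_comm]
    rw [this, ← Finset.sum_mul, hsum, zero_mul]
  set c : V → ℝ := fun i => ⟪x, b i⟫ with hc
  have hsum_sq : ∑ v, g v ^ 2 = ∑ i, c i ^ 2 := by
    have h1 : ⟪x, x⟫ = ∑ v, g v ^ 2 := by
      rw [PiLp.inner_apply]
      exact Finset.sum_congr rfl fun v _ => by simp [RCLike.inner_apply, hxv, sq]
    have h2 := b.sum_inner_mul_inner x x
    rw [h1] at h2
    rw [← h2]
    exact Finset.sum_congr rfl fun i _ => by rw [sq, real_inner_comm x (b i)]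
  set T := Matrix.toEuclideanLin (G.lapMatrix ℝ) with hT
  have hSym : T.IsSymmetric := Matrix.isHermitian_iff_isSymmetric.1 hA
  have hTb : ∀ i, T (b i) = μ i • b i := by
    intro i
    apply (WithLp.equiv 2 (V → ℝ)).injective
    show (G.lapMatrix ℝ) *ᵥ ⇑(b i) = WithLp.equiv 2 (V → ℝ) (μ i • b i)
    have := hA.mulVec_eigenvectorBasis i
    ext v
    simpa using congrFun this v
  have hquad : ⟪x, T x⟫ = ∑ i, μ i * c i ^ 2 := by
    rw [← b.sum_inner_mul_inner x (T x)]
    refine Finset.sum_congr rfl fun i _ => ?_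
    have : ⟪(b i : EuclideanSpace ℝ V), T x⟫ = ⟪T (b i), x⟫ := (hSym (b i) x).symm
    rw [this, hTb i, real_inner_smul_left, ← real_inner_comm (b i) x]
    simp only [hc]
    ring
  have hmain : lam * ∑ i, c i ^ 2 ≤ ∑ i, μ i * c i ^ 2 := by
    rw [Finset.mul_sum]
    refine Finset.sum_le_sum fun i _ => ?_
    rcases hgap' i with h0 | hge
    · rw [h0, zero_mul]
      have : c i = 0 := hker i h0
      rw [this]; simp
    · exact mul_le_mul_of_nonneg_right hge (sq_nonneg _)
  have hdot : ⟪x, T x⟫ =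
      (∑ v, ∑ w, if G.Adj v w then (g v - g w) ^ 2 else 0) / 2 := by
    have h1 : ⟪x, T x⟫ = Matrix.toLinearMap₂' ℝ (G.lapMatrix ℝ) g g := by
      rw [Matrix.toLinearMap₂'_apply', PiLp.inner_apply, dotProduct]
      refine Finset.sum_congr rfl fun v _ => ?_
      simp only [RCLike.inner_apply, starRingEnd_apply, star_trivial]
      exact mul_comm _ _
    rw [h1, SimpleGraph.lapMatrix_toLinearMap₂']
  have hnn : 0 ≤ ∑ v, ∑ w, if G.Adj v w then (g v - g w) ^ 2 else 0 := by
    refine Finset.sum_nonneg fun v _ => Finset.sum_nonneg fun w _ => ?_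
    split <;> positivity
  calc lam * ∑ v, g v ^ 2 = lam * ∑ i, c i ^ 2 := by rw [hsum_sq]
    _ ≤ ∑ i, μ i * c i ^ 2 := hmain
    _ = ⟪x, T x⟫ := hquad.symm
    _ = (∑ v, ∑ w, if G.Adj v w then (g v - g w) ^ 2 else 0) / 2 := hdot
    _ ≤ ∑ v, ∑ w, if G.Adj v w then (g v - g w) ^ 2 else 0 := by linarith

lemma lp_sq_summable (f : lp (fun _ : ℕ => ℝ) 2) : Summable fun i => (f i) ^ 2 := by
  have := (lp.memℓp f).summable (p := 2) (by norm_num)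
  simpa [Real.rpow_natCast, sq_abs, Real.norm_eq_abs,
    show ((2 : ENNReal).toReal) = (2 : ℝ) by norm_num] using this

lemma lp_norm_sq_eq (f : lp (fun _ : ℕ => ℝ) 2) : ‖f‖ ^ 2 = ∑' i, (f i) ^ 2 := by
  have := lp.norm_rpow_eq_tsum (p := 2) (by norm_num) f
  simp only [show ((2 : ENNReal).toReal) = (2 : ℝ) by norm_num] at this
  rw [show ((2:ℝ)) = ((2:ℕ) : ℝ) by norm_num] at this
  simp only [Real.rpow_natCast, Real.norm_eq_abs, sq_abs] at this
  exact this

lemma hilbert_poincare {V : Type} [Fintype V] [DecidableEq V]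
    (G : SimpleGraph V) [DecidableRel G.Adj] (hconn : G.Connected)
    (lam : ℝ) (hlam : 0 < lam)
    (hgap : ∀ μ : ℝ, (∃ g : V → ℝ, g ≠ 0 ∧ (G.lapMatrix ℝ).mulVec g = μ • g) → μ = 0 ∨ lam ≤ μ)
    (h : V → lp (fun _ : ℕ => ℝ) 2) (hsum : ∑ v, h v = 0) :
    lam * ∑ v, ‖h v‖ ^ 2 ≤ ∑ v, ∑ w, if G.Adj v w then ‖h v - h w‖ ^ 2 else 0 := by
  classical
  have hcoord : ∀ i : ℕ, ∑ v, h v i = 0 := by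
    intro i
    have h1 : (⇑(∑ v, h v) : ∀ _ : ℕ, ℝ) i = (0 : ℝ) := by rw [hsum]; rfl
    rw [lp.coeFn_sum] at h1
    simpa using h1
  have hSv : ∀ v, Summable fun i => (h v i) ^ 2 := fun v => lp_sq_summable (h v)
  set F : V → V → ℕ → ℝ := fun v w i => if G.Adj v w then (h v i - h w i) ^ 2 else 0 with hF
  have hSF : ∀ v w, Summable (F v w) := by
    intro v w
    by_cases hvw : G.Adj v w
    · have := lp_sq_summable (h v - h w)
      simp only [hF, hvw, if_true]
      simpa [lp.coeFn_sub, Pi.sub_apply] using this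
    · simpa [hF, hvw] using summable_zero
  have hSFv : ∀ v, Summable fun i => ∑ w, F v w i :=
    fun v => summable_sum fun w _ => hSF v w
  have hL : Summable fun i => lam * ∑ v, (h v i) ^ 2 :=
    (summable_sum (fun v (_ : v ∈ Finset.univ) => hSv v)).mul_left lam
  have hR : Summable fun i => ∑ v, ∑ w, F v w i :=
    summable_sum fun v _ => hSFv v
  have hLHS : lam * ∑ v, ‖h v‖ ^ 2 = ∑' i, lam * ∑ v, (h v i) ^ 2 := by
    rw [tsum_mul_left]
    congr 1
    rw [show (∑ v, ‖h v‖ ^ 2) = ∑ v, ∑' i, (h v i) ^ 2 from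
      Finset.sum_congr rfl fun v _ => lp_norm_sq_eq (h v)]
    exact (Summable.tsum_finsetSum (fun v _ => hSv v)).symm
  have hRHS : ∑ v, ∑ w, (if G.Adj v w then ‖h v - h w‖ ^ 2 else 0) =
      ∑' i, ∑ v, ∑ w, F v w i := by
    have step1 : ∀ v w : V, (if G.Adj v w then ‖h v - h w‖ ^ 2 else 0) = ∑' i, F v w i := by
      intro v w
      by_cases hvw : G.Adj v w
      · simp only [hF, hvw, if_true]
        rw [lp_norm_sq_eq (h v - h w)]
        exact tsum_congr fun i => by simp [lp.coeFn_sub]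
      · simp [hF, hvw]
    calc ∑ v, ∑ w, (if G.Adj v w then ‖h v - h w‖ ^ 2 else 0)
        = ∑ v, ∑ w, ∑' i, F v w i :=
          Finset.sum_congr rfl fun v _ => Finset.sum_congr rfl fun w _ => step1 v w
      _ = ∑ v, ∑' i, ∑ w, F v w i :=
          Finset.sum_congr rfl fun v _ => (Summable.tsum_finsetSum (fun w _ => hSF v w)).symm
      _ = ∑' i, ∑ v, ∑ w, F v w i := (Summable.tsum_finsetSum (fun v _ => hSFv v)).symm
  rw [hLHS, hRHS]
  refine Summable.tsum_le_tsum (fun i => ?_) hL hR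
  exact real_poincare G hconn lam hgap (fun v => h v i) (hcoord i)

lemma ball_card_le {V : Type} [Fintype V] [DecidableEq V]
    (G : SimpleGraph V) [DecidableRel G.Adj] (hconn : G.Connected)
    (D : ℕ) (hdeg : ∀ v, G.degree v = D) (v : V) :
    ∀ (R : ℕ) (s : Finset V), (∀ w ∈ s, G.dist v w ≤ R) → s.card ≤ (D + 1) ^ R := by
  classical
  intro R
  induction R with
  | zero =>
    intro s hs
    have : s ⊆ {v} := by
      intro w hw
      have h0 : G.dist v w = 0 := Nat.le_zero.mp (hs w hw)
      have := (hconn.dist_eq_zero_iff).mp h0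
      simp [this]
    simpa using Finset.card_le_card this
  | succ R ih =>
    intro s hs
    set t : Finset V := Finset.univ.filter (fun u => G.dist v u ≤ R) with ht
    have hsub : s ⊆ t.biUnion (fun u => insert u (G.neighborFinset u)) := by
      intro w hw
      rw [Finset.mem_biUnion]
      by_cases hle : G.dist v w ≤ R
      · exact ⟨w, by simp [ht, hle], Finset.mem_insert_self _ _⟩
      · have hd : G.dist v w = R + 1 := le_antisymm (hs w hw) (Nat.succ_le_of_lt (Nat.lt_of_not_le hle))
        obtain ⟨p, hp⟩ := hconn.exists_walk_length_eq_dist v w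
        rw [hd] at hp
        have hq : p.reverse.length = R + 1 := by rw [SimpleGraph.Walk.length_reverse, hp]
        cases hq' : p.reverse with
        | nil => rw [hq'] at hq; simp at hq
        | cons hadj q =>
          rename_i u
          rw [hq'] at hq
          simp only [SimpleGraph.Walk.length_cons, Nat.succ_inj] at hq
          refine ⟨u, ?_, ?_⟩
          · have : G.dist v u ≤ R := by
              have := SimpleGraph.dist_le q.reverse
              rwa [SimpleGraph.Walk.length_reverse, hq] at this
            simp [ht, this]
          · exact Finset.mem_insert_of_mem ((G.mem_neighborFinset u w).mpr hadj.symm)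
    calc s.card ≤ (t.biUnion (fun u => insert u (G.neighborFinset u))).card :=
          Finset.card_le_card hsub
      _ ≤ ∑ u ∈ t, (insert u (G.neighborFinset u)).card := Finset.card_biUnion_le
      _ ≤ ∑ u ∈ t, (D + 1) := by
          refine Finset.sum_le_sum fun u _ => ?_
          calc (insert u (G.neighborFinset u)).card ≤ (G.neighborFinset u).card + 1 :=
                Finset.card_insert_le _ _
            _ = D + 1 := by rw [G.card_neighborFinset_eq_degree u, hdeg u]
      _ = t.card * (D + 1) := by rw [Finset.sum_const, smul_eq_mul]
      _ ≤ (D + 1) ^ R * (D + 1) := by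
          have := ih t (fun w hw => by simpa [ht] using (Finset.mem_filter.mp hw).2)
          exact Nat.mul_le_mul_right _ this
      _ = (D + 1) ^ (R + 1) := by ring

open scoped ENNReal

/-- No expander coarsely embeds into Hilbert space: given a sequence of finite connected
`D`-regular graphs with sizes tending to infinity and Laplacian spectral gap at least
`lam > 0`, the disjoint union (with a metric restricting to the graph metric on each
piece, distinct pieces being further apart than their diameters) admits no coarse
embedding into `ℓ²`. -/
theorem expander_no_coarse_embedding
    (V : ℕ → Type) [∀ n, Fintype (V n)] [∀ n, DecidableEq (V n)]
    (Gr : ∀ n, SimpleGraph (V n)) [∀ n, DecidableRel (Gr n).Adj]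
    (hconn : ∀ n, (Gr n).Connected)
    (D : ℕ) (hreg : ∀ n v, (Gr n).degree v = D)
    (hcard : Filter.Tendsto (fun n => Fintype.card (V n)) Filter.atTop Filter.atTop)
    (lam : ℝ) (hlam : 0 < lam)
    (hgap : ∀ (n : ℕ) (μ : ℝ),
      (∃ g : V n → ℝ, g ≠ 0 ∧ ((Gr n).lapMatrix ℝ).mulVec g = μ • g) → μ = 0 ∨ lam ≤ μ)
    (d : (Σ n, V n) → (Σ n, V n) → ℝ)
    (hrefl : ∀ x, d x x = 0)
    (hsymmd : ∀ x y, d x y = d y x)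
    (htri : ∀ x y z, d x z ≤ d x y + d y z)
    (hgraph : ∀ (n : ℕ) (v w : V n), d ⟨n, v⟩ ⟨n, w⟩ = ((Gr n).dist v w : ℝ))
    (hsep : ∀ (n m : ℕ), n ≠ m → ∀ (v : V n) (w : V m) (v' v'' : V n),
      ((Gr n).dist v' v'' : ℝ) ≤ d ⟨n, v⟩ ⟨m, w⟩) :
    ¬ ∃ (f : (Σ n, V n) → lp (fun _ : ℕ => ℝ) 2) (ρ₁ ρ₂ : ℝ → ℝ),
        Monotone ρ₁ ∧ Monotone ρ₂ ∧ Filter.Tendsto ρ₁ Filter.atTop Filter.atTop ∧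
        ∀ x y, ρ₁ (d x y) ≤ dist (f x) (f y) ∧ dist (f x) (f y) ≤ ρ₂ (d x y) := by
  classical
  rintro ⟨f, ρ₁, ρ₂, hm1, hm2, htop, hf⟩
  set C : ℝ := max (ρ₂ 1) 0 with hC
  have hC0 : 0 ≤ C := le_max_right _ _
  set K : ℝ := 2 * (D : ℝ) * C ^ 2 / lam with hK
  have hK0 : 0 ≤ K := by positivity
  set A : ℝ := Real.sqrt (2 * K + 1) with hA
  have hA0 : 0 ≤ A := Real.sqrt_nonneg _
  have hA2 : A ^ 2 = 2 * K + 1 := Real.sq_sqrt (by linarith)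
  obtain ⟨t, ht⟩ := Filter.eventually_atTop.mp (Filter.tendsto_atTop.mp htop A)
  set R : ℕ := ⌈t⌉₊ with hR
  set B : ℕ := (D + 1) ^ R with hB
  have hB1 : 1 ≤ B := Nat.one_le_pow _ _ (Nat.succ_pos D)
  obtain ⟨n, hn⟩ := (Filter.tendsto_atTop.mp hcard (2 * B)).exists
  set G := Gr n with hG
  set N : ℕ := Fintype.card (V n) with hN
  have hNB : 2 * B ≤ N := hn
  have hN2 : 2 ≤ N := le_trans (by omega) hNB
  have hNpos : (0 : ℝ) < (N : ℝ) := by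
    have h0 : (0 : ℕ) < N := by omega
    exact_mod_cast h0
  set F : V n → lp (fun _ : ℕ => ℝ) 2 := fun v => f ⟨n, v⟩ with hF
  set S : ℝ := ∑ v, ∑ w, ‖F v - F w‖ ^ 2 with hS
  set h : V n → lp (fun _ : ℕ => ℝ) 2 := fun v => (N : ℝ) • F v - ∑ w, F w with hh
  have hsum : ∑ v, h v = 0 := by
    simp only [hh]
    rw [Finset.sum_sub_distrib, ← Finset.smul_sum, Finset.sum_const, Finset.card_univ, ← hN,
      Nat.cast_smul_eq_nsmul ℝ N (∑ w : V n, F w), sub_self]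
  have hdiff : ∀ v w, h v - h w = (N : ℝ) • (F v - F w) := by
    intro v w
    simp only [hh]
    rw [sub_sub_sub_cancel_right, smul_sub]
  have hndiff : ∀ v w, ‖h v - h w‖ ^ 2 = (N : ℝ) ^ 2 * ‖F v - F w‖ ^ 2 := by
    intro v w
    rw [hdiff, norm_smul, mul_pow]
    congr 2
    simp
  have hadj : ∀ v w, G.Adj v w → ‖F v - F w‖ ≤ C := by
    intro v w hvw
    have h1 : dist (f ⟨n, v⟩) (f ⟨n, w⟩) ≤ ρ₂ (d ⟨n, v⟩ ⟨n, w⟩) := (hf _ _).2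
    have h2 : d ⟨n, v⟩ ⟨n, w⟩ = (1 : ℝ) := by
      rw [hgraph n v w, SimpleGraph.dist_eq_one_iff_adj.mpr hvw, Nat.cast_one]
    rw [h2] at h1
    calc ‖F v - F w‖ = dist (f ⟨n, v⟩) (f ⟨n, w⟩) := (dist_eq_norm _ _).symm
      _ ≤ ρ₂ 1 := h1
      _ ≤ C := le_max_left _ _
  have hpoin := hilbert_poincare G (hconn n) lam hlam (hgap n) h hsum
  have hcount : ∀ v : V n, (∑ w, if G.Adj v w then (N : ℝ) ^ 2 * C ^ 2 else 0)
      = (N : ℝ) ^ 2 * C ^ 2 * (D : ℝ) := by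
    intro v
    have hdeg : ((G.degree v : ℝ)) = ∑ w, if G.Adj v w then (1 : ℝ) else 0 :=
      SimpleGraph.degree_eq_sum_if_adj G v
    calc (∑ w, if G.Adj v w then (N : ℝ) ^ 2 * C ^ 2 else 0)
        = ∑ w, ((N : ℝ) ^ 2 * C ^ 2) * (if G.Adj v w then (1 : ℝ) else 0) := by
          refine Finset.sum_congr rfl fun w _ => ?_
          split <;> ring
      _ = ((N : ℝ) ^ 2 * C ^ 2) * ∑ w, (if G.Adj v w then (1 : ℝ) else 0) := by
          rw [Finset.mul_sum]
      _ = ((N : ℝ) ^ 2 * C ^ 2) * (G.degree v : ℝ) := by rw [← hdeg]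
      _ = (N : ℝ) ^ 2 * C ^ 2 * (D : ℝ) := by rw [hreg n v]
  have hupper : lam * ∑ v, ‖h v‖ ^ 2 ≤ (N : ℝ) ^ 2 * C ^ 2 * (D : ℝ) * (N : ℝ) := by
    refine le_trans hpoin ?_
    calc (∑ v, ∑ w, if G.Adj v w then ‖h v - h w‖ ^ 2 else 0)
        ≤ ∑ v, ∑ w, (if G.Adj v w then (N : ℝ) ^ 2 * C ^ 2 else 0) := by
          refine Finset.sum_le_sum fun v _ => Finset.sum_le_sum fun w _ => ?_
          by_cases hvw : G.Adj v w
          · simp only [hvw, if_true]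
            rw [hndiff]
            have h2 : ‖F v - F w‖ ^ 2 ≤ C ^ 2 :=
              pow_le_pow_left₀ (norm_nonneg _) (hadj v w hvw) 2
            nlinarith [sq_nonneg ((N : ℝ))]
          · simp [hvw]
      _ = ∑ _v : V n, (N : ℝ) ^ 2 * C ^ 2 * (D : ℝ) :=
          Finset.sum_congr rfl fun v _ => hcount v
      _ = (N : ℝ) ^ 2 * C ^ 2 * (D : ℝ) * (N : ℝ) := by
          rw [Finset.sum_const, Finset.card_univ, ← hN, nsmul_eq_mul]
          ring
  have hlink : (N : ℝ) ^ 2 * S = 2 * (N : ℝ) * ∑ v, ‖h v‖ ^ 2 := by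
    have e1 : ∀ v w : V n, ‖h v - h w‖ ^ 2
        = ‖h v‖ ^ 2 - 2 * (inner ℝ (h v) (h w) : ℝ) + ‖h w‖ ^ 2 := fun v w =>
      norm_sub_sq_real _ _
    have e2 : ∑ v, ∑ w, (inner ℝ (h v) (h w) : ℝ) = (0 : ℝ) := by
      have e2' : ∑ v, ∑ w, (inner ℝ (h v) (h w) : ℝ) = (inner ℝ (∑ v, h v) (∑ w, h w) : ℝ) := by
        rw [sum_inner]
        exact Finset.sum_congr rfl fun v _ => by rw [inner_sum]
      rw [e2', hsum, inner_zero_left]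
    have e3 : (∑ _v : V n, ∑ v : V n, ‖h v‖ ^ 2) = (N : ℝ) * ∑ v, ‖h v‖ ^ 2 := by
      rw [Finset.sum_const, Finset.card_univ, ← hN, nsmul_eq_mul]
    have e4 : (∑ v : V n, ∑ _w : V n, ‖h v‖ ^ 2) = (N : ℝ) * ∑ v, ‖h v‖ ^ 2 := by
      rw [Finset.sum_comm]
      exact e3
    calc (N : ℝ) ^ 2 * S = ∑ v, ∑ w, (N : ℝ) ^ 2 * ‖F v - F w‖ ^ 2 := by
          rw [hS, Finset.mul_sum]
          exact Finset.sum_congr rfl fun v _ => by rw [Finset.mul_sum]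
      _ = ∑ v, ∑ w, ‖h v - h w‖ ^ 2 := by
          refine Finset.sum_congr rfl fun v _ => Finset.sum_congr rfl fun w _ => ?_
          rw [hndiff]
      _ = ∑ v, ∑ w, (‖h v‖ ^ 2 - 2 * (inner ℝ (h v) (h w) : ℝ) + ‖h w‖ ^ 2) := by
          refine Finset.sum_congr rfl fun v _ => Finset.sum_congr rfl fun w _ => e1 v w
      _ = 2 * (N : ℝ) * ∑ v, ‖h v‖ ^ 2 := by
          simp only [Finset.sum_add_distrib, Finset.sum_sub_distrib, ← Finset.mul_sum]
          rw [e2, e3, e4]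
          ring
  have hSK : S ≤ K * (N : ℝ) ^ 2 := by
    have key : (N : ℝ) ^ 2 * (lam * S) ≤ (N : ℝ) ^ 2 * (lam * (K * (N : ℝ) ^ 2)) := by
      calc (N : ℝ) ^ 2 * (lam * S) = lam * ((N : ℝ) ^ 2 * S) := by ring
        _ = lam * (2 * (N : ℝ) * ∑ v, ‖h v‖ ^ 2) := by rw [hlink]
        _ = 2 * (N : ℝ) * (lam * ∑ v, ‖h v‖ ^ 2) := by ring
        _ ≤ 2 * (N : ℝ) * ((N : ℝ) ^ 2 * C ^ 2 * (D : ℝ) * (N : ℝ)) :=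
            mul_le_mul_of_nonneg_left hupper (by positivity)
        _ = (N : ℝ) ^ 2 * (lam * (K * (N : ℝ) ^ 2)) := by
            rw [hK]
            field_simp
    have k1 := le_of_mul_le_mul_left key (by positivity : (0 : ℝ) < (N : ℝ) ^ 2)
    exact le_of_mul_le_mul_left k1 hlam
  have hlow : ∀ v w : V n, ¬ G.dist v w ≤ R → A ≤ ‖F v - F w‖ := by
    intro v w hvw
    have h1 : (R : ℝ) + 1 ≤ ((G.dist v w : ℕ) : ℝ) := by
      have h1' : R + 1 ≤ G.dist v w := Nat.succ_le_of_lt (Nat.lt_of_not_le hvw)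
      exact_mod_cast h1'
    have h2 : t ≤ d ⟨n, v⟩ ⟨n, w⟩ := by
      rw [hgraph n v w]
      calc t ≤ (R : ℝ) := Nat.le_ceil t
        _ ≤ ((G.dist v w : ℕ) : ℝ) := by linarith
    calc A ≤ ρ₁ (d ⟨n, v⟩ ⟨n, w⟩) := ht _ h2
      _ ≤ dist (f ⟨n, v⟩) (f ⟨n, w⟩) := (hf _ _).1
      _ = ‖F v - F w‖ := dist_eq_norm _ _
  have hlower : (N : ℝ) * (((N : ℝ) - B) * A ^ 2) ≤ S := by
    rw [hS]
    have hv : ∀ v : V n, ((N : ℝ) - B) * A ^ 2 ≤ ∑ w, ‖F v - F w‖ ^ 2 := by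
      intro v
      set good : Finset (V n) := Finset.univ.filter (fun w => ¬ G.dist v w ≤ R) with hgood
      set bad : Finset (V n) := Finset.univ.filter (fun w => G.dist v w ≤ R) with hbad
      have hbadcard : bad.card ≤ B :=
        ball_card_le G (hconn n) D (fun u => hreg n u) v R bad
          (fun w hw => (Finset.mem_filter.mp hw).2)
      have hsplit : bad.card + good.card = N := by
        rw [hbad, hgood, Finset.card_filter_add_card_filter_not, Finset.card_univ]
      have hgoodcard : (N : ℝ) - B ≤ (good.card : ℝ) := by
        have g1 : (bad.card : ℝ) + good.card = N := by exact_mod_cast hsplit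
        have g2 : (bad.card : ℝ) ≤ B := by exact_mod_cast hbadcard
        linarith
      calc ((N : ℝ) - B) * A ^ 2 ≤ (good.card : ℝ) * A ^ 2 :=
            mul_le_mul_of_nonneg_right hgoodcard (sq_nonneg A)
        _ = ∑ _w ∈ good, A ^ 2 := by rw [Finset.sum_const, nsmul_eq_mul]
        _ ≤ ∑ w ∈ good, ‖F v - F w‖ ^ 2 := by
            refine Finset.sum_le_sum fun w hw => ?_
            exact pow_le_pow_left₀ hA0 (hlow v w (Finset.mem_filter.mp hw).2) 2
        _ ≤ ∑ w, ‖F v - F w‖ ^ 2 :=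
            Finset.sum_le_sum_of_subset_of_nonneg (Finset.filter_subset _ _)
              (fun w _ _ => by positivity)
    calc (N : ℝ) * (((N : ℝ) - B) * A ^ 2) = ∑ _v : V n, ((N : ℝ) - B) * A ^ 2 := by
          rw [Finset.sum_const, Finset.card_univ, ← hN, nsmul_eq_mul]
      _ ≤ ∑ v, ∑ w, ‖F v - F w‖ ^ 2 := Finset.sum_le_sum fun v _ => hv v
  have hBR : (1 : ℝ) ≤ (B : ℝ) := by exact_mod_cast hB1
  have hNBR : 2 * (B : ℝ) ≤ (N : ℝ) := by exact_mod_cast hNB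
  have hhalf : (N : ℝ) / 2 ≤ (N : ℝ) - B := by linarith
  have c1 : (N : ℝ) * ((N : ℝ) / 2 * (2 * K + 1)) ≤ (N : ℝ) * (((N : ℝ) - B) * A ^ 2) := by
    rw [hA2]
    exact mul_le_mul_of_nonneg_left
      (mul_le_mul_of_nonneg_right hhalf (by linarith)) (le_of_lt hNpos)
  have expand : (N : ℝ) * ((N : ℝ) / 2 * (2 * K + 1)) = K * (N : ℝ) ^ 2 + (N : ℝ) ^ 2 / 2 := by
    ring
  have hfin : (N : ℝ) ^ 2 / 2 ≤ 0 := by linarith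
  have hfin2 : (0 : ℝ) < (N : ℝ) ^ 2 / 2 := by positivity
  linarith
end
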